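/- arXiv:2410.00607 — 7 statements merged into one kernel-verified Lean document; each statement's English description precedes it below -/
import Mathlib

section
/- Let ⟨C_β : β < ω₁⟩ be a C-sequence on ω₁ and let α ≤ β ≤ γ < ω₁ with α a limit ordinal. If ξ ∈ (max L(α,γ), α], then Tr(ξ,γ) = Tr(α,γ) ∪ Tr(ξ,α); i.e., the walk from γ to ξ passes through α and end-extends the walk from γ to α. -/
/-- `min (C \ α)`, the next step of the walk. -/
noncomputable def walkMin (C : Set Ordinal) (α : Ordinal) : Ordinal := sInf (C ∩ Set.Ici α)

/-- Let `⟨C_β : β < ω₁⟩` be a C-sequence on `ω₁` and `Tr` the walk it determines, and let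
`α ≤ β ≤ γ < ω₁` with `α` a limit ordinal.  If `ξ ∈ (max L(α,γ), α]` — that is, `ξ ≤ α` and
no member of any `C_b` for a step `b ∈ Tr(α,γ) \ {α}` lies in the interval `[ξ, α)` — then
`Tr(ξ,γ) = Tr(α,γ) ∪ Tr(ξ,α)`: the walk from `γ` to `ξ` passes through `α` and end-extends
the walk from `γ` to `α`. -/
theorem walk_end_extension (C : Ordinal → Set Ordinal)
    (hsub : ∀ β < (Cardinal.aleph 1).ord, C β ⊆ Set.Iio β)
    (hcof : ∀ β < (Cardinal.aleph 1).ord, ∀ x < β, ∃ y ∈ C β, x ≤ y)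
    (hclosed : ∀ β < (Cardinal.aleph 1).ord, ∀ x < β, (C β ∩ Set.Iio x).Nonempty →
      sSup (C β ∩ Set.Iio x) = x → x ∈ C β)
    (hsucc : ∀ α, α + 1 < (Cardinal.aleph 1).ord → C (α + 1) = {α})
    (Tr : Ordinal → Ordinal → Set Ordinal)
    (hTr_refl : ∀ α < (Cardinal.aleph 1).ord, Tr α α = {α})
    (hTr_step : ∀ α β, α < β → β < (Cardinal.aleph 1).ord →
      Tr α β = insert β (Tr α (walkMin (C β) α)))
    (α β γ ξ : Ordinal) (hαβ : α ≤ β) (hβγ : β ≤ γ) (hγ : γ < (Cardinal.aleph 1).ord)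
    (hα : Order.IsSuccLimit α) (hξα : ξ ≤ α)
    (hξL : ∀ b ∈ Tr α γ, b ≠ α → ∀ y ∈ C b, y < α → y < ξ) :
    Tr ξ γ = Tr α γ ∪ Tr ξ α := by
  have key : ∀ g, α ≤ g → g < (Cardinal.aleph 1).ord →
      (∀ b ∈ Tr α g, b ≠ α → ∀ y ∈ C b, y < α → y < ξ) →
      Tr ξ g = Tr α g ∪ Tr ξ α := by
    intro g
    induction g using Ordinal.induction with
    | _ g ih =>
    intro hαg hg hL
    rcases eq_or_lt_of_le hαg with rfl | hlt
    · rw [hTr_refl _ hg]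
      rcases eq_or_lt_of_le hξα with rfl | hξlt
      · rw [hTr_refl ξ hg]; simp
      · rw [hTr_step ξ _ hξlt hg]; simp
    · have hgTr : g ∈ Tr α g := by rw [hTr_step α g hlt hg]; exact Set.mem_insert _ _
      set g' := walkMin (C g) α with hg'
      have hne : (C g ∩ Set.Ici α).Nonempty := by
        obtain ⟨y, hy, hαy⟩ := hcof g hg α hlt
        exact ⟨y, hy, hαy⟩
      have hg'mem : g' ∈ C g ∩ Set.Ici α := csInf_mem hne
      have hg'lt : g' < g := hsub g hg hg'mem.1
      have hαg' : α ≤ g' := hg'mem.2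
      have hstep_eq : walkMin (C g) ξ = g' := by
        rw [hg']
        unfold walkMin
        congr 1
        ext y
        constructor
        · rintro ⟨hyC, hyξ⟩
          refine ⟨hyC, ?_⟩
          by_contra h
          rw [Set.mem_Ici, not_le] at h
          exact absurd (hL g hgTr hlt.ne' y hyC h) (not_lt.2 hyξ)
        · rintro ⟨hyC, hyα⟩; exact ⟨hyC, le_trans hξα hyα⟩
      have hsubTr : Tr α g' ⊆ Tr α g := by
        rw [hTr_step α g hlt hg]; exact Set.subset_insert _ _
      have hL' : ∀ b ∈ Tr α g', b ≠ α → ∀ y ∈ C b, y < α → y < ξ :=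
        fun b hb => hL b (hsubTr hb)
      have hξg : ξ < g := lt_of_le_of_lt hξα hlt
      rw [hTr_step ξ g hξg hg, hstep_eq, ih g' hg'lt hαg' (hg'lt.trans hg) hL',
        hTr_step α g hlt hg, Set.insert_union]
  exact key γ (hαβ.trans hβγ) hγ hξL
end

section
/- Let ⟨C_β : β < ω₁⟩ be an ordertype-minimal C-sequence on ω₁ and let ρ₂(α,β) = |Tr(α,β)| − 1 be the number of steps of the walk from β to α. Then for all β ≤ γ < ω₁, the function ξ ↦ ρ₂(ξ,γ) − ρ₂(ξ,β) on [0,β) is locally constant, i.e., eventually constant below every limit ordinal α ≤ β. -/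
/-- `s` has order type at most `δ`: it embeds strictly monotonically into `Iio δ`. -/
def OtpLe (s : Set Ordinal) (δ : Ordinal) : Prop := ∃ f : ↥s → ↥(Set.Iio δ), StrictMono f

/-- `ρ₂(α,β) = |Tr(α,β)| − 1`, the number of steps of the walk. -/
noncomputable def rho2c (Tr : Ordinal → Ordinal → Set Ordinal) (α β : Ordinal) : ℤ :=
  ((Tr α β).ncard : ℤ) - 1

section Aux

variable {C : Ordinal → Set Ordinal} {Tr : Ordinal → Ordinal → Set Ordinal}

/-- Basic properties of `walkMin` when `ξ < β < ω₁`. -/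
lemma walkMin_basic (hsub : ∀ β < (Cardinal.aleph 1).ord, C β ⊆ Set.Iio β)
    (hcof : ∀ β < (Cardinal.aleph 1).ord, ∀ x < β, ∃ y ∈ C β, x ≤ y)
    {ξ β : Ordinal} (hβ : β < (Cardinal.aleph 1).ord) (hξβ : ξ < β) :
    walkMin (C β) ξ ∈ C β ∧ ξ ≤ walkMin (C β) ξ ∧ walkMin (C β) ξ < β := by
  obtain ⟨y, hyC, hyξ⟩ := hcof β hβ ξ hξβ
  have hne : (C β ∩ Set.Ici ξ).Nonempty := ⟨y, hyC, hyξ⟩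
  have hmem : walkMin (C β) ξ ∈ C β ∩ Set.Ici ξ := csInf_mem hne
  exact ⟨hmem.1, hmem.2, hsub β hβ hmem.1⟩

/-- Traces are contained in `[ξ, β]`, finite, and contain `β`. -/
lemma trace_basic (hsub : ∀ β < (Cardinal.aleph 1).ord, C β ⊆ Set.Iio β)
    (hcof : ∀ β < (Cardinal.aleph 1).ord, ∀ x < β, ∃ y ∈ C β, x ≤ y)
    (hTr_refl : ∀ α < (Cardinal.aleph 1).ord, Tr α α = {α})
    (hTr_step : ∀ α β, α < β → β < (Cardinal.aleph 1).ord →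
      Tr α β = insert β (Tr α (walkMin (C β) α))) :
    ∀ β < (Cardinal.aleph 1).ord, ∀ ξ ≤ β,
      Tr ξ β ⊆ Set.Icc ξ β ∧ (Tr ξ β).Finite ∧ β ∈ Tr ξ β := by
  intro β
  induction β using Ordinal.induction with
  | h β IH =>
    intro hβ ξ hξβ
    rcases eq_or_lt_of_le hξβ with rfl | hlt
    · rw [hTr_refl ξ hβ]
      exact ⟨by simp, Set.finite_singleton _, rfl⟩
    · obtain ⟨hδC, hξδ, hδβ⟩ := walkMin_basic hsub hcof hβ hlt
      obtain ⟨hsub', hfin', _⟩ := IH _ hδβ (hδβ.trans hβ) ξ hξδ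
      rw [hTr_step ξ β hlt hβ]
      refine ⟨?_, hfin'.insert β, Set.mem_insert _ _⟩
      intro x hx
      rcases hx with rfl | hx
      · exact ⟨hlt.le, le_rfl⟩
      · exact ⟨(hsub' hx).1, (hsub' hx).2.trans hδβ.le⟩

/-- For a limit ordinal `α < β`, the part of `C β` below `α` is bounded strictly below `α`. -/
lemma sup_below_lt (hclosed : ∀ β < (Cardinal.aleph 1).ord, ∀ x < β, (C β ∩ Set.Iio x).Nonempty →
      sSup (C β ∩ Set.Iio x) = x → x ∈ C β)
    (hmin : ∀ β < (Cardinal.aleph 1).ord, OtpLe (C β) Ordinal.omega0)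
    {α β : Ordinal} (hα : Order.IsSuccLimit α) (hαβ : α < β) (hβ : β < (Cardinal.aleph 1).ord) :
    sSup (C β ∩ Set.Iio α) < α := by
  set S := C β ∩ Set.Iio α with hS
  rcases S.eq_empty_or_nonempty with he | hne
  · rw [he, csSup_empty]
    exact hα.bot_lt
  · have hbdd : BddAbove S := ⟨α, fun x hx => hx.2.le⟩
    have hle : sSup S ≤ α := csSup_le hne fun x hx => hx.2.le
    rcases lt_or_eq_of_le hle with h | h
    · exact h
    · -- sSup S = α, so α ∈ C β, contradiction with order type ≤ ω
      exfalso
      have hαC : α ∈ C β := hclosed β hβ α hαβ hne h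
      obtain ⟨f, hf⟩ := hmin β hβ
      -- C β ∩ Iio α is finite
      obtain ⟨n, hn⟩ := Ordinal.lt_omega0.mp (f ⟨α, hαC⟩).2
      have key : ∀ s : ↥S, ∃ m : ℕ, ((f ⟨s.1, s.2.1⟩).1 = (m : Ordinal)) ∧ m < n := by
        intro s
        obtain ⟨m, hm⟩ := Ordinal.lt_omega0.mp (f ⟨s.1, s.2.1⟩).2
        refine ⟨m, hm, ?_⟩
        have hlt : ((f ⟨s.1, s.2.1⟩ : ↥(Set.Iio Ordinal.omega0)) : Ordinal)
            < ((f ⟨α, hαC⟩ : ↥(Set.Iio Ordinal.omega0)) : Ordinal) :=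
          hf (Subtype.mk_lt_mk.mpr s.2.2)
        rw [hm, hn] at hlt
        exact_mod_cast hlt
      choose g hg1 hg2 using key
      have hfin : S.Finite := by
        rw [← Set.finite_coe_iff]
        refine Finite.of_injective (fun s : ↥S => (⟨g s, hg2 s⟩ : Fin n)) ?_
        intro a b hab
        have h0 : g a = g b := congrArg Fin.val hab
        have h1 : ((f ⟨a.1, a.2.1⟩ : ↥(Set.Iio Ordinal.omega0)) : Ordinal)
            = ((f ⟨b.1, b.2.1⟩ : ↥(Set.Iio Ordinal.omega0)) : Ordinal) := by
          rw [hg1 a, hg1 b, h0]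
        have h2 := hf.injective (Subtype.ext h1)
        have h3 : (a.1 : Ordinal) = b.1 := congrArg (fun x : ↥(C β) => (x : Ordinal)) h2
        exact Subtype.ext h3
      have hmem : sSup S ∈ S := hne.csSup_mem hfin
      rw [h] at hmem
      exact absurd hmem.2 (lt_irrefl α)

/-- If `ξ` is above everything of `C β` below `α`, the walk step from `β` aiming at `ξ`
equals the step aiming at `α`. -/
lemma walkMin_eq_of_gt_sup {α β ξ : Ordinal}
    (h1 : sSup (C β ∩ Set.Iio α) < ξ) (h2 : ξ ≤ α) :
    walkMin (C β) ξ = walkMin (C β) α := by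
  have hbdd : BddAbove (C β ∩ Set.Iio α) := ⟨α, fun x hx => hx.2.le⟩
  have : C β ∩ Set.Ici ξ = C β ∩ Set.Ici α := by
    ext c
    constructor
    · rintro ⟨hc, hcξ⟩
      refine ⟨hc, ?_⟩
      rcases lt_or_ge c α with hcα | hcα
      · exact absurd ((le_csSup hbdd ⟨hc, hcα⟩).trans_lt h1) (not_lt.mpr hcξ)
      · exact hcα
    · rintro ⟨hc, hcα⟩
      exact ⟨hc, h2.trans hcα⟩
  unfold walkMin
  rw [this]

/-- The key unfolding: `ρ₂(ξ,γ) = ρ₂(α,γ) + ρ₂(ξ,α)` for `ξ` close enough below limit `α ≤ γ`. -/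
lemma rho2_split (hsub : ∀ β < (Cardinal.aleph 1).ord, C β ⊆ Set.Iio β)
    (hcof : ∀ β < (Cardinal.aleph 1).ord, ∀ x < β, ∃ y ∈ C β, x ≤ y)
    (hclosed : ∀ β < (Cardinal.aleph 1).ord, ∀ x < β, (C β ∩ Set.Iio x).Nonempty →
      sSup (C β ∩ Set.Iio x) = x → x ∈ C β)
    (hmin : ∀ β < (Cardinal.aleph 1).ord, OtpLe (C β) Ordinal.omega0)
    (hTr_refl : ∀ α < (Cardinal.aleph 1).ord, Tr α α = {α})
    (hTr_step : ∀ α β, α < β → β < (Cardinal.aleph 1).ord →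
      Tr α β = insert β (Tr α (walkMin (C β) α))) :
    ∀ γ < (Cardinal.aleph 1).ord, ∀ α, Order.IsSuccLimit α → α ≤ γ →
      ∃ η < α, ∀ ξ, η < ξ → ξ ≤ α →
        rho2c Tr ξ γ = rho2c Tr α γ + rho2c Tr ξ α := by
  intro γ
  induction γ using Ordinal.induction with
  | h γ IH =>
    intro hγ α hα hαγ
    rcases eq_or_lt_of_le hαγ with rfl | hlt
    · refine ⟨0, hα.bot_lt, fun ξ hη hξα => ?_⟩
      have : rho2c Tr α α = 0 := by
        unfold rho2c
        rw [hTr_refl α hγ, Set.ncard_singleton]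
        ring
      rw [this, zero_add]
    · -- α < γ
      obtain ⟨hδC, hαδ, hδγ⟩ := walkMin_basic hsub hcof hγ hlt
      have hδω : walkMin (C γ) α < (Cardinal.aleph 1).ord := hδγ.trans hγ
      have hη₀ : sSup (C γ ∩ Set.Iio α) < α := sup_below_lt hclosed hmin hα hlt hγ
      -- ρ₂(α,γ) = ρ₂(α,δ) + 1
      obtain ⟨hsubδ, hfinδ, _⟩ :=
        trace_basic hsub hcof hTr_refl hTr_step (walkMin (C γ) α) hδω α hαδ
      have hγnm : γ ∉ Tr α (walkMin (C γ) α) :=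
        fun h => absurd ((hsubδ h).2.trans_lt hδγ) (lt_irrefl γ)
      have hαγcard : rho2c Tr α γ = rho2c Tr α (walkMin (C γ) α) + 1 := by
        unfold rho2c
        rw [hTr_step α γ hlt hγ, Set.ncard_insert_of_notMem hγnm hfinδ]
        push_cast
        ring
      rcases eq_or_lt_of_le hαδ with heq | hαδlt
      · -- walkMin (C γ) α = α : last step reaches α directly
        refine ⟨sSup (C γ ∩ Set.Iio α), hη₀, fun ξ hηξ hξα => ?_⟩
        have hwm : walkMin (C γ) ξ = α :=
          (walkMin_eq_of_gt_sup hηξ hξα).trans heq.symm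
        obtain ⟨hsubα, hfinα, _⟩ :=
          trace_basic hsub hcof hTr_refl hTr_step α (hlt.trans hγ) ξ hξα
        have hγnm' : γ ∉ Tr ξ α := fun h => absurd ((hsubα h).2.trans_lt hlt) (lt_irrefl γ)
        have h1 : rho2c Tr ξ γ = rho2c Tr ξ α + 1 := by
          unfold rho2c
          rw [hTr_step ξ γ (hξα.trans_lt hlt) hγ, hwm,
            Set.ncard_insert_of_notMem hγnm' hfinα]
          push_cast
          ring
        have h2 : rho2c Tr α (walkMin (C γ) α) = 0 := by
          unfold rho2c
          rw [← heq, hTr_refl α (hlt.trans hγ), Set.ncard_singleton]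
          ring
        rw [h1, hαγcard, h2]
        ring
      · -- α < walkMin (C γ) α : use induction hypothesis
        obtain ⟨η₁, hη₁α, hη₁⟩ := IH (walkMin (C γ) α) hδγ hδω α hα hαδlt.le
        refine ⟨max (sSup (C γ ∩ Set.Iio α)) η₁, max_lt hη₀ hη₁α, fun ξ hηξ hξα => ?_⟩
        have hη₀ξ : sSup (C γ ∩ Set.Iio α) < ξ := (le_max_left _ _).trans_lt hηξ
        have hη₁ξ : η₁ < ξ := (le_max_right _ _).trans_lt hηξ
        have hwm : walkMin (C γ) ξ = walkMin (C γ) α := walkMin_eq_of_gt_sup hη₀ξ hξα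
        obtain ⟨hsubξδ, hfinξδ, _⟩ :=
          trace_basic hsub hcof hTr_refl hTr_step (walkMin (C γ) α) hδω ξ (hξα.trans hαδ)
        have hγnm' : γ ∉ Tr ξ (walkMin (C γ) α) :=
          fun h => absurd ((hsubξδ h).2.trans_lt hδγ) (lt_irrefl γ)
        have h1 : rho2c Tr ξ γ = rho2c Tr ξ (walkMin (C γ) α) + 1 := by
          unfold rho2c
          rw [hTr_step ξ γ (hξα.trans_lt hlt) hγ, hwm,
            Set.ncard_insert_of_notMem hγnm' hfinξδ]
          push_cast
          ring
        rw [h1, hη₁ ξ hη₁ξ hξα, hαγcard]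
        ring

end Aux

/-- For an ordertype-minimal C-sequence on `ω₁` and `ρ₂(α,β) = |Tr(α,β)| − 1` the number of
steps of the walk from `β` to `α`: for all `β ≤ γ < ω₁` the function
`ξ ↦ ρ₂(ξ,γ) − ρ₂(ξ,β)` on `[0,β)` is locally constant, i.e. eventually constant below
(and including at) every limit ordinal `α ≤ β`. -/
theorem rho2_coherent (C : Ordinal → Set Ordinal)
    (hsub : ∀ β < (Cardinal.aleph 1).ord, C β ⊆ Set.Iio β)
    (hcof : ∀ β < (Cardinal.aleph 1).ord, ∀ x < β, ∃ y ∈ C β, x ≤ y)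
    (hclosed : ∀ β < (Cardinal.aleph 1).ord, ∀ x < β, (C β ∩ Set.Iio x).Nonempty →
      sSup (C β ∩ Set.Iio x) = x → x ∈ C β)
    (hsucc : ∀ α, α + 1 < (Cardinal.aleph 1).ord → C (α + 1) = {α})
    (hmin : ∀ β < (Cardinal.aleph 1).ord, OtpLe (C β) Ordinal.omega0)
    (Tr : Ordinal → Ordinal → Set Ordinal)
    (hTr_refl : ∀ α < (Cardinal.aleph 1).ord, Tr α α = {α})
    (hTr_step : ∀ α β, α < β → β < (Cardinal.aleph 1).ord →
      Tr α β = insert β (Tr α (walkMin (C β) α))) :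
    ∀ β γ, β ≤ γ → γ < (Cardinal.aleph 1).ord → ∀ α, Order.IsSuccLimit α → α ≤ β →
      ∃ η < α, ∀ ξ, η < ξ → ξ ≤ α →
        rho2c Tr ξ γ - rho2c Tr ξ β = rho2c Tr α γ - rho2c Tr α β := by
  intro β γ hβγ hγ α hα hαβ
  have hβ : β < (Cardinal.aleph 1).ord := hβγ.trans_lt hγ
  obtain ⟨η₁, hη₁α, hη₁⟩ := rho2_split hsub hcof hclosed hmin hTr_refl hTr_step γ hγ α hα
    (hαβ.trans hβγ)
  obtain ⟨η₂, hη₂α, hη₂⟩ := rho2_split hsub hcof hclosed hmin hTr_refl hTr_step β hβ α hα hαβ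
  refine ⟨max η₁ η₂, max_lt hη₁α hη₂α, fun ξ hηξ hξα => ?_⟩
  rw [hη₁ ξ ((le_max_left _ _).trans_lt hηξ) hξα,
    hη₂ ξ ((le_max_right _ _).trans_lt hηξ) hξα]
  ring
end

section
/- There is no function φ : ω₁ → ℤ trivializing the family ⟨ρ₁(·,β) : β < ω₁⟩ when ρ₁ is defined from an ordertype-minimal C-sequence on ω₁; equivalently, the family of fiber maps ρ₁(·,β) is coherent mod finite and each fiber map is finite-to-one, and any family of finite-to-one functions coherent mod finite on ω₁ admits no mod-finite trivialization φ : ω₁ → ℤ. -/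
/-- Any family `⟨φ_β : β → ℤ | β < ω₁⟩` of finite-to-one functions which is coherent mod
finite admits no mod-finite trivialization `φ : ω₁ → ℤ`.  (This is the key sub-claim behind
the nontriviality of the family of fiber maps `ρ₁(·,β)` of the maximal weight function of an
ordertype-minimal C-sequence on `ω₁`, whose fiber maps are coherent mod finite and
finite-to-one.) -/
theorem no_trivialization_of_finite_to_one_coherent (φ : Ordinal → Ordinal → ℤ)
    (hcoh : ∀ β γ, β ≤ γ → γ < (Cardinal.aleph 1).ord →
      {ξ | ξ < β ∧ φ β ξ ≠ φ γ ξ}.Finite)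
    (hf2o : ∀ β < (Cardinal.aleph 1).ord, ∀ z : ℤ, {ξ | ξ < β ∧ φ β ξ = z}.Finite) :
    ¬ ∃ ψ : Ordinal → ℤ, ∀ β < (Cardinal.aleph 1).ord,
      {ξ | ξ < β ∧ ψ ξ ≠ φ β ξ}.Finite := by
  rintro ⟨ψ, hψ⟩
  set Ω := (Cardinal.aleph 1).ord with hΩdef
  have hcof : Ω.cof = Cardinal.aleph 1 := Cardinal.isRegular_aleph_one.cof_eq
  have hlim : Order.IsSuccLimit Ω := Cardinal.isSuccLimit_ord (Cardinal.aleph0_le_aleph 1)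
  -- suprema of ℕ-indexed families below Ω stay below Ω
  have hsup : ∀ f : ℕ → Ordinal, (∀ n, f n < Ω) → iSup f < Ω := by
    intro f hf
    refine Ordinal.iSup_lt_ord_lift ?_ hf
    rw [hcof]
    simpa using Cardinal.aleph0_lt_aleph_one
  -- some fiber of ψ (below Ω) is infinite
  have hfib : ∃ z : ℤ, {ξ | ξ < Ω ∧ ψ ξ = z}.Infinite := by
    by_contra h
    push_neg at h
    have hsub : Set.Iio Ω ⊆ ⋃ z : ℤ, {ξ | ξ < Ω ∧ ψ ξ = z} := by
      intro ξ hξ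
      exact Set.mem_iUnion.2 ⟨ψ ξ, hξ, rfl⟩
    have hc : (Set.Iio Ω).Countable :=
      (Set.countable_iUnion fun z => (h z).countable).mono hsub
    have hne : (Set.Iio Ω).Nonempty := ⟨0, hlim.pos⟩
    obtain ⟨f, hf⟩ := hc.exists_eq_range hne
    have hflt : ∀ n, f n < Ω := by
      intro n
      have : f n ∈ Set.Iio Ω := hf ▸ Set.mem_range_self n
      exact this
    have hlt : iSup (fun n => f n + 1) < Ω :=
      hsup _ fun n => hlim.succ_lt (hflt n)
    have : iSup (fun n => f n + 1) ∈ Set.Iio Ω := hlt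
    rw [hf] at this
    obtain ⟨k, hk⟩ := this
    have h1 : f k + 1 ≤ iSup (fun n => f n + 1) := Ordinal.le_iSup (fun n => f n + 1) k
    rw [← hk] at h1
    exact (Order.lt_succ (f k)).not_ge h1
  obtain ⟨z, hz⟩ := hfib
  -- choose countably many points in the fiber and bound them by β < Ω
  let g := hz.natEmbedding
  have hgΩ : ∀ n, (g n : Ordinal) < Ω := fun n => (g n).2.1
  have hgz : ∀ n, ψ (g n) = z := fun n => (g n).2.2
  set β := iSup (fun n => (g n : Ordinal) + 1) with hβdef
  have hβ : β < Ω := hsup _ fun n => hlim.succ_lt (hgΩ n)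
  have hgβ : ∀ n, (g n : Ordinal) < β := by
    intro n
    exact (Order.lt_succ ((g n : Ordinal))).trans_le (Ordinal.le_iSup (fun n => (g n : Ordinal) + 1) n)
  -- the range of g is infinite but contained in a finite set
  have hinj : Function.Injective fun n => (g n : Ordinal) :=
    Subtype.coe_injective.comp g.injective
  have hrange : (Set.range fun n => (g n : Ordinal)).Infinite :=
    Set.infinite_range_of_injective hinj
  have hfin : ({ξ | ξ < β ∧ φ β ξ = z} ∪ {ξ | ξ < β ∧ ψ ξ ≠ φ β ξ}).Finite :=
    (hf2o β hβ z).union (hψ β hβ)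
  refine hrange ((hfin.subset ?_))
  rintro ξ ⟨n, rfl⟩
  by_cases hcase : φ β (g n) = z
  · exact Or.inl ⟨hgβ n, hcase⟩
  · exact Or.inr ⟨hgβ n, by rw [hgz n]; exact fun h => hcase h.symm⟩
end

section
/- Let ⟨C_β : β < ω₁⟩ be an ordertype-minimal C-sequence on ω₁ and define r₁(α,γ) = {β < γ : max L(β,γ) = α}. Then each r₁(α,γ) is finite, and there is no function φ : ω₁ → [ω₁]^{<ω} such that for every γ < ω₁ the functions φ↾γ and r₁(·,γ) agree on a tail of γ (for γ of cofinality ω). -/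
/-- `max L(β,γ)`: the supremum, over the steps `b ∈ Tr(β,γ) \ {β}` of the walk from `γ` to
`β`, of `sup (β ∩ C_b)`. -/
noncomputable def maxL (C : Ordinal → Set Ordinal) (Tr : Ordinal → Ordinal → Set Ordinal)
    (β γ : Ordinal) : Ordinal :=
  sSup {x | ∃ b ∈ Tr β γ, b ≠ β ∧ x = sSup (C b ∩ Set.Iio β)}

/-- `r₁(α,γ) = {β < γ : max L(β,γ) = α}`. -/
def r1 (C : Ordinal → Set Ordinal) (Tr : Ordinal → Ordinal → Set Ordinal)
    (α γ : Ordinal) : Set Ordinal :=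
  {β | β < γ ∧ maxL C Tr β γ = α}

lemma walkMin_of_mem {C : Set Ordinal} {α : Ordinal} (h : α ∈ C) : walkMin C α = α :=
  le_antisymm (csInf_le (OrderBot.bddBelow _) ⟨h, le_refl α⟩)
    (le_csInf ⟨α, h, le_refl α⟩ (fun _ hb => hb.2))

lemma iio_nat_finite {x : Ordinal} (hx : x < Ordinal.omega0) : (Set.Iio x).Finite := by
  obtain ⟨n, rfl⟩ := Ordinal.lt_omega0.1 hx
  have hsub : Set.Iio ((n : ℕ) : Ordinal) ⊆ (fun m : ℕ => (m : Ordinal)) '' Set.Iio n := by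
    intro x hx
    have hxo : x < Ordinal.omega0 := hx.trans (Ordinal.nat_lt_omega0 n)
    obtain ⟨m, rfl⟩ := Ordinal.lt_omega0.1 hxo
    exact ⟨m, by simpa using hx, rfl⟩
  exact ((Set.finite_Iio n).image _).subset hsub

lemma seg_finite {s : Set Ordinal} (h : OtpLe s Ordinal.omega0) {c : Ordinal} (hc : c ∈ s) :
    (s ∩ Set.Iio c).Finite := by
  obtain ⟨f, hf⟩ := h
  by_contra hinf
  rw [← Set.not_infinite, not_not] at hinf
  have e := hinf.natEmbedding
  have hinj : Function.Injective (fun n : ℕ =>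
      ((f ⟨(e n : Ordinal), (e n).2.1⟩ : ↥(Set.Iio Ordinal.omega0)) : Ordinal)) := by
    intro a b hab
    apply e.injective
    have h2 : ((⟨(e a : Ordinal), (e a).2.1⟩ : ↥s) : Ordinal)
        = ((⟨(e b : Ordinal), (e b).2.1⟩ : ↥s) : Ordinal) :=
      congrArg Subtype.val (hf.injective (Subtype.ext hab))
    exact Subtype.ext h2
  have hmem : ∀ n : ℕ, ((f ⟨(e n : Ordinal), (e n).2.1⟩ : ↥(Set.Iio Ordinal.omega0)) : Ordinal)
      ∈ Set.Iio ((f ⟨c, hc⟩ : ↥(Set.Iio Ordinal.omega0)) : Ordinal) := by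
    intro n
    exact hf (show (⟨(e n : Ordinal), (e n).2.1⟩ : ↥s) < ⟨c, hc⟩ from (e n).2.2)
  exact Set.not_infinite.2 (iio_nat_finite (f ⟨c, hc⟩).2)
    (Set.infinite_of_injective_forall_mem hinj hmem)

lemma maxL_le (C : Ordinal → Set Ordinal) (Tr : Ordinal → Ordinal → Set Ordinal)
    (β γ : Ordinal) : maxL C Tr β γ ≤ β := by
  apply csSup_le'
  rintro x ⟨b, _, _, rfl⟩
  apply csSup_le'
  rintro y ⟨_, hy⟩
  exact le_of_lt hy

lemma maxL_ge (C : Ordinal → Set Ordinal) (Tr : Ordinal → Ordinal → Set Ordinal)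
    {β γ b : Ordinal} (hb : b ∈ Tr β γ) (hne : b ≠ β) :
    sSup (C b ∩ Set.Iio β) ≤ maxL C Tr β γ := by
  apply le_csSup
  · refine ⟨β, ?_⟩
    rintro x ⟨b', _, _, rfl⟩
    apply csSup_le'
    rintro y ⟨_, hy⟩
    exact le_of_lt hy
  · exact ⟨b, hb, hne, rfl⟩

lemma maxL_of_mem (C : Ordinal → Set Ordinal) (Tr : Ordinal → Ordinal → Set Ordinal)
    (hTr_refl : ∀ α < (Cardinal.aleph 1).ord, Tr α α = {α})
    (hTr_step : ∀ α β, α < β → β < (Cardinal.aleph 1).ord →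
      Tr α β = insert β (Tr α (walkMin (C β) α)))
    {α γ : Ordinal} (hmem : α ∈ C γ) (hαγ : α < γ) (hγ : γ < (Cardinal.aleph 1).ord) :
    maxL C Tr α γ = sSup (C γ ∩ Set.Iio α) := by
  have htr : Tr α γ = insert γ {α} := by
    rw [hTr_step α γ hαγ hγ, walkMin_of_mem hmem, hTr_refl α (hαγ.trans hγ)]
  unfold maxL
  rw [htr]
  have hset : {x | ∃ b ∈ insert γ ({α} : Set Ordinal), b ≠ α ∧ x = sSup (C b ∩ Set.Iio α)}
      = {sSup (C γ ∩ Set.Iio α)} := by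
    ext x
    constructor
    · rintro ⟨b, hb, hne, rfl⟩
      rcases hb with rfl | hb
      · rfl
      · exact absurd (Set.mem_singleton_iff.1 hb) hne
    · rintro rfl
      exact ⟨γ, Set.mem_insert _ _, ne_of_gt hαγ, rfl⟩
  rw [hset, csSup_singleton]

/-- Lemma A: the walk from any `b ≥ λ` to any sufficiently large `β < λ` passes through `λ`. -/
lemma trace_through (C : Ordinal → Set Ordinal)
    (hsub : ∀ β < (Cardinal.aleph 1).ord, C β ⊆ Set.Iio β)
    (hcof : ∀ β < (Cardinal.aleph 1).ord, ∀ x < β, ∃ y ∈ C β, x ≤ y)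
    (hmin : ∀ β < (Cardinal.aleph 1).ord, OtpLe (C β) Ordinal.omega0)
    (Tr : Ordinal → Ordinal → Set Ordinal)
    (hTr_step : ∀ α β, α < β → β < (Cardinal.aleph 1).ord →
      Tr α β = insert β (Tr α (walkMin (C β) α)))
    {lam : Ordinal} (hlim : Order.IsSuccLimit lam) :
    ∀ b, lam ≤ b → b < (Cardinal.aleph 1).ord →
      ∃ m, m < lam ∧ ∀ β, m ≤ β → β < lam → lam ∈ Tr β b := by
  intro b
  induction b using Ordinal.induction with
  | h b IH =>
    intro hlb hbΩ
    rcases eq_or_lt_of_le hlb with rfl | hlt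
    · refine ⟨0, hlim.pos, fun β _ hβ => ?_⟩
      rw [hTr_step β lam hβ hbΩ]
      exact Set.mem_insert _ _
    · set b' := walkMin (C b) lam with hb'def
      have hne : (C b ∩ Set.Ici lam).Nonempty := by
        obtain ⟨y, hy, hly⟩ := hcof b hbΩ lam hlt
        exact ⟨y, hy, hly⟩
      have hb'mem : b' ∈ C b ∩ Set.Ici lam := csInf_mem hne
      have hb'C : b' ∈ C b := hb'mem.1
      have hlamb' : lam ≤ b' := hb'mem.2
      have hb'b : b' < b := hsub b hbΩ hb'C
      obtain ⟨m', hm', hm'tr⟩ := IH b' hb'b hlamb' (hb'b.trans hbΩ)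
      have hfin : (C b ∩ Set.Iio lam).Finite :=
        (seg_finite (hmin b hbΩ) hb'C).subset
          (fun x hx => ⟨hx.1, lt_of_lt_of_le hx.2 hlamb'⟩)
      set s := sSup (C b ∩ Set.Iio lam) with hsdef
      have hs : s < lam := by
        rcases Set.eq_empty_or_nonempty (C b ∩ Set.Iio lam) with he | hne2
        · rw [hsdef, he, csSup_empty]
          exact hlim.pos
        · exact (hne2.csSup_mem hfin).2
      have hs1 : s + 1 < lam := by
        rw [Ordinal.add_one_eq_succ]
        exact hlim.succ_lt hs
      refine ⟨max m' (s + 1), max_lt hm' hs1, ?_⟩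
      intro β hβ hβlam
      have h1 : m' ≤ β := le_trans (le_max_left _ _) hβ
      have h2 : s < β := lt_of_lt_of_le (by rw [Ordinal.add_one_eq_succ]; exact Order.lt_succ s)
        (le_trans (le_max_right _ _) hβ)
      have hseteq : C b ∩ Set.Ici β = C b ∩ Set.Ici lam := by
        ext x
        constructor
        · rintro ⟨hxC, hxβ⟩
          refine ⟨hxC, ?_⟩
          rcases lt_or_ge x lam with hxl | hxl
          · have hxs : x ≤ s := le_csSup hfin.bddAbove ⟨hxC, hxl⟩
            exact absurd hxβ (not_le.2 (lt_of_le_of_lt hxs h2))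
          · exact hxl
        · rintro ⟨hxC, hxl⟩
          exact ⟨hxC, le_trans (le_of_lt hβlam) hxl⟩
      have hwm : walkMin (C b) β = b' := by
        rw [hb'def]
        unfold walkMin
        rw [hseteq]
      rw [hTr_step β b (hβlam.trans hlt) hbΩ, hwm]
      exact Set.mem_insert_of_mem _ (hm'tr β h1 hβlam)

lemma ord_lt_add_one_iff {a b : Ordinal} : a < b + 1 ↔ a ≤ b := by
  rw [Ordinal.add_one_eq_succ]; exact Order.lt_succ_iff

lemma r1_finite (C : Ordinal → Set Ordinal)
    (hsub : ∀ β < (Cardinal.aleph 1).ord, C β ⊆ Set.Iio β)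
    (hcof : ∀ β < (Cardinal.aleph 1).ord, ∀ x < β, ∃ y ∈ C β, x ≤ y)
    (hmin : ∀ β < (Cardinal.aleph 1).ord, OtpLe (C β) Ordinal.omega0)
    (Tr : Ordinal → Ordinal → Set Ordinal)
    (hTr_step : ∀ α β, α < β → β < (Cardinal.aleph 1).ord →
      Tr α β = insert β (Tr α (walkMin (C β) α)))
    (α γ : Ordinal) (hγ : γ < (Cardinal.aleph 1).ord) : (r1 C Tr α γ).Finite := by
  by_contra hinf
  rw [← Set.not_infinite, not_not] at hinf
  set S := r1 C Tr α γ with hSdef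
  have hSsub : S ⊆ Set.Iio γ := fun β hβ => hβ.1
  set T := {μ : Ordinal | (S ∩ Set.Iio μ).Infinite} with hTdef
  have hγT : γ ∈ T := by
    have : S ∩ Set.Iio γ = S := Set.inter_eq_self_of_subset_left hSsub
    simpa [hTdef, this] using hinf
  have hTne : T.Nonempty := ⟨γ, hγT⟩
  set lam := sInf T with hlamdef
  have hlamγ : lam ≤ γ := csInf_le (OrderBot.bddBelow _) hγT
  have hlamT : lam ∈ T := by
    by_contra h
    have hfin : (S ∩ Set.Iio lam).Finite := Set.not_infinite.1 h
    have h1 : lam + 1 ∉ T := by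
      intro h1
      have : S ∩ Set.Iio (lam + 1) ⊆ (S ∩ Set.Iio lam) ∪ {lam} := by
        rintro x ⟨hxS, hxlt⟩
        rcases lt_or_eq_of_le (ord_lt_add_one_iff.1 hxlt) with h | h
        · exact Or.inl ⟨hxS, h⟩
        · exact Or.inr (by simp [h])
      exact h1 ((hfin.union (Set.finite_singleton lam)).subset this)
    have : lam + 1 ≤ lam := by
      apply le_csInf hTne
      intro μ hμ
      by_contra hc
      push_neg at hc
      exact h1 (Set.Infinite.mono (Set.inter_subset_inter_right S (Set.Iio_subset_Iio hc.le)) hμ)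
    exact absurd this (not_le.2 (by rw [Ordinal.add_one_eq_succ]; exact Order.lt_succ lam))
  have hfinbelow : ∀ μ, μ < lam → (S ∩ Set.Iio μ).Finite := by
    intro μ hμ
    by_contra h
    rw [← Set.not_infinite, not_not] at h
    exact absurd (csInf_le (OrderBot.bddBelow _) (show μ ∈ T from h)) (not_le.2 hμ)
  have hlamlim : Order.IsSuccLimit lam := by
    rcases Ordinal.zero_or_succ_or_isSuccLimit lam with h0 | ⟨a, ha⟩ | h
    · exfalso
      rw [h0] at hlamT
      have hemp : S ∩ Set.Iio (0 : Ordinal) = ∅ := by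
        ext x; simp [not_lt_zero]
      have : (S ∩ Set.Iio (0 : Ordinal)).Infinite := hlamT
      rw [hemp] at this
      exact Set.not_infinite.2 Set.finite_empty this
    · exfalso
      have halam : a < lam := by rw [← ha]; exact Order.lt_succ a
      have hafin := hfinbelow a halam
      have : S ∩ Set.Iio lam ⊆ (S ∩ Set.Iio a) ∪ {a} := by
        rintro x ⟨hxS, hxlt⟩
        rw [Set.mem_Iio, ← ha, Order.lt_succ_iff] at hxlt
        rcases lt_or_eq_of_le hxlt with h | h
        · exact Or.inl ⟨hxS, h⟩
        · exact Or.inr (by simp [h])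
      exact hlamT ((hafin.union (Set.finite_singleton a)).subset this)
    · exact h
  have hlamΩ : lam < (Cardinal.aleph 1).ord := lt_of_le_of_lt hlamγ hγ
  obtain ⟨m, hm, htr⟩ := trace_through C hsub hcof hmin Tr hTr_step hlamlim γ hlamγ hγ
  -- α < lam
  obtain ⟨β₁, hβ₁⟩ := hlamT.nonempty
  have hαlam : α < lam := by
    have h1 : maxL C Tr β₁ γ = α := hβ₁.1.2
    have h2 : maxL C Tr β₁ γ ≤ β₁ := maxL_le C Tr β₁ γ
    exact lt_of_le_of_lt (h1 ▸ h2) hβ₁.2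
  -- pick c ∈ C lam above max α m
  have hmax : max α m + 1 < lam := by
    rw [Ordinal.add_one_eq_succ]
    exact hlamlim.succ_lt (max_lt hαlam hm)
  obtain ⟨c, hcC, hcge⟩ := hcof lam hlamΩ (max α m + 1) hmax
  have hclam : c < lam := hsub lam hlamΩ hcC
  have hcα : α < c := lt_of_lt_of_le (lt_of_le_of_lt (le_max_left α m)
    (by rw [Ordinal.add_one_eq_succ]; exact Order.lt_succ _)) hcge
  have hcm : m ≤ c := le_trans (le_trans (le_max_right α m)
    (le_of_lt (by rw [Ordinal.add_one_eq_succ]; exact Order.lt_succ _))) hcge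
  -- pick β ∈ S with c < β < lam
  have hc1 : c + 1 < lam := by rw [Ordinal.add_one_eq_succ]; exact hlamlim.succ_lt hclam
  have hdiff : ((S ∩ Set.Iio lam) \ (S ∩ Set.Iio (c + 1))).Nonempty :=
    (hlamT.diff (hfinbelow (c + 1) hc1)).nonempty
  obtain ⟨β, hβmem, hβnot⟩ := hdiff
  have hβS : β ∈ S := hβmem.1
  have hβlam : β < lam := hβmem.2
  have hcβ : c < β := by
    by_contra h
    push_neg at h
    exact hβnot ⟨hβS, Set.mem_Iio.2 (ord_lt_add_one_iff.2 h)⟩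
  have hβm : m ≤ β := le_trans hcm (le_of_lt hcβ)
  have hlamTr : lam ∈ Tr β γ := htr β hβm hβlam
  have hkey : sSup (C lam ∩ Set.Iio β) ≤ maxL C Tr β γ :=
    maxL_ge C Tr hlamTr (ne_of_gt hβlam)
  have hckey : c ≤ sSup (C lam ∩ Set.Iio β) :=
    le_csSup ⟨β, fun x hx => le_of_lt hx.2⟩ ⟨hcC, hcβ⟩
  have : maxL C Tr β γ = α := hβS.2
  exact absurd (le_trans hckey hkey) (not_le.2 (this ▸ hcα))

universe uu in
lemma r1_nontrivial (C : Ordinal.{uu} → Set Ordinal.{uu})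
    (hsub : ∀ β < (Cardinal.aleph 1).ord, C β ⊆ Set.Iio β)
    (hcof : ∀ β < (Cardinal.aleph 1).ord, ∀ x < β, ∃ y ∈ C β, x ≤ y)
    (hmin : ∀ β < (Cardinal.aleph 1).ord, OtpLe (C β) Ordinal.omega0)
    (Tr : Ordinal → Ordinal → Set Ordinal)
    (hTr_refl : ∀ α < (Cardinal.aleph 1).ord, Tr α α = {α})
    (hTr_step : ∀ α β, α < β → β < (Cardinal.aleph 1).ord →
      Tr α β = insert β (Tr α (walkMin (C β) α))) :
    ¬ ∃ φ : Ordinal → Set Ordinal, (∀ ξ, (φ ξ).Finite) ∧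
      ∀ γ, γ < (Cardinal.aleph 1).ord → γ.cof = Cardinal.aleph0 →
        ∃ η < γ, ∀ β, η ≤ β → β < γ → φ β = r1 C Tr β γ := by
  rintro ⟨φ, hφfin, hφ⟩
  have hΩcof : ((Cardinal.aleph 1).ord).cof = Cardinal.aleph 1 :=
    Cardinal.isRegular_aleph_one.cof_eq
  have hΩlim : Order.IsSuccLimit ((Cardinal.aleph 1).ord) :=
    Cardinal.isSuccLimit_ord (Cardinal.aleph0_le_aleph 1)
  have hΩpos : (0 : Ordinal) < (Cardinal.aleph 1).ord := hΩlim.pos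
  have hcofω : ∀ γ, γ < (Cardinal.aleph 1).ord → Order.IsSuccLimit γ → γ.cof = Cardinal.aleph0 := by
    intro γ h1 h2
    refine le_antisymm ?_ (Ordinal.aleph0_le_cof.2 h2)
    have hcard : γ.card < Cardinal.aleph 1 := Cardinal.lt_ord.1 h1
    have hle : γ.card ≤ Cardinal.aleph0 := by
      have := Cardinal.succ_aleph0
      rw [← this, Order.lt_succ_iff] at hcard
      exact hcard
    exact le_trans (Ordinal.cof_le_card γ) hle
  -- choose the agreement point η γ for each limit γ < ω₁
  have Hη : ∀ γ : Ordinal, ∃ η : Ordinal, γ < (Cardinal.aleph 1).ord → Order.IsSuccLimit γ →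
      η < γ ∧ ∀ β, η ≤ β → β < γ → φ β = r1 C Tr β γ := by
    intro γ
    by_cases h : γ < (Cardinal.aleph 1).ord ∧ Order.IsSuccLimit γ
    · obtain ⟨η, hη, hag⟩ := hφ γ h.1 (hcofω γ h.1 h.2)
      exact ⟨η, fun _ _ => ⟨hη, hag⟩⟩
    · exact ⟨0, fun h1 h2 => absurd ⟨h1, h2⟩ h⟩
  choose η hη using Hη
  -- g γ = first element of C γ above η γ
  set g : Ordinal → Ordinal := fun γ => sInf (C γ ∩ Set.Ici (η γ + 1)) with hgdef
  have hgspec : ∀ γ, γ < (Cardinal.aleph 1).ord → Order.IsSuccLimit γ →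
      g γ ∈ C γ ∧ η γ < g γ ∧ g γ < γ := by
    intro γ h1 h2
    have hηγ := (hη γ h1 h2).1
    have hsuc : η γ + 1 < γ := by
      rw [Ordinal.add_one_eq_succ]; exact h2.succ_lt hηγ
    have hne : (C γ ∩ Set.Ici (η γ + 1)).Nonempty := by
      obtain ⟨y, hy, hly⟩ := hcof γ h1 (η γ + 1) hsuc
      exact ⟨y, hy, hly⟩
    have hmem : g γ ∈ C γ ∩ Set.Ici (η γ + 1) := csInf_mem hne
    refine ⟨hmem.1, ?_, hsub γ h1 hmem.1⟩
    exact lt_of_lt_of_le (by rw [Ordinal.add_one_eq_succ]; exact Order.lt_succ _) hmem.2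
  -- closure argument: get a uniform bound b₀ on an unbounded set of limit ordinals
  have hclaim : ∃ b₀, b₀ < (Cardinal.aleph 1).ord ∧ ∀ x, x < (Cardinal.aleph 1).ord →
      ∃ γ, x ≤ γ ∧ γ < (Cardinal.aleph 1).ord ∧ Order.IsSuccLimit γ ∧ g γ ≤ b₀ := by
    by_contra hcon
    push_neg at hcon
    -- hcon : ∀ b₀, b₀ < Ω → ∃ x, x < Ω ∧ ∀ γ, x ≤ γ → γ < Ω → Order.IsSuccLimit γ → b₀ < g γ
    have Hh : ∀ b : Ordinal, ∃ x : Ordinal, b < (Cardinal.aleph 1).ord →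
        x < (Cardinal.aleph 1).ord ∧
        ∀ γ, x ≤ γ → γ < (Cardinal.aleph 1).ord → Order.IsSuccLimit γ → b < g γ := by
      intro b
      by_cases hb : b < (Cardinal.aleph 1).ord
      · obtain ⟨x, hx1, hx2⟩ := hcon b hb
        exact ⟨x, fun _ => ⟨hx1, hx2⟩⟩
      · exact ⟨0, fun h => absurd h hb⟩
    choose h hh using Hh
    -- build an increasing ω-sequence closed under h
    set c : ℕ → Ordinal := fun n => Nat.rec 0
      (fun _ cn => max (cn + 1) (Ordinal.bsup.{uu,uu} (cn + 1) (fun b _ => h b))) n with hcdef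
    have hcsucc : ∀ n, c (n + 1) = max (c n + 1)
        (Ordinal.bsup.{uu,uu} (c n + 1) (fun b _ => h b)) := fun n => rfl
    have hcΩ : ∀ n, c n < (Cardinal.aleph 1).ord := by
      intro n
      induction n with
      | zero => exact hΩpos
      | succ n ih =>
        rw [hcsucc]
        apply max_lt
        · rw [Ordinal.add_one_eq_succ]; exact hΩlim.succ_lt ih
        · apply Ordinal.bsup_lt_ord
          · rw [hΩcof]
            exact Cardinal.lt_ord.1 (by rw [Ordinal.add_one_eq_succ]; exact hΩlim.succ_lt ih)
          · intro i hi
            have hiΩ : i < (Cardinal.aleph 1).ord :=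
              lt_of_lt_of_le hi (by rw [Ordinal.add_one_eq_succ]; exact Order.succ_le_of_lt ih)
            exact (hh i hiΩ).1
    have hcmono : ∀ n, c n < c (n + 1) := by
      intro n
      rw [hcsucc]
      exact lt_of_lt_of_le (by rw [Ordinal.add_one_eq_succ]; exact Order.lt_succ _)
        (le_max_left _ _)
    set γs := iSup c with hγsdef
    have hγsΩ : γs < (Cardinal.aleph 1).ord := by
      rw [hγsdef]
      apply Ordinal.iSup_lt_ord_lift _ hcΩ
      rw [Cardinal.mk_nat, Cardinal.lift_aleph0, hΩcof]
      exact Cardinal.aleph0_lt_aleph_one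
    have hcle : ∀ n, c n ≤ γs := Ordinal.le_iSup c
    have hγslim : Order.IsSuccLimit γs := by
      rw [Ordinal.isSuccLimit_iff, Order.isSuccPrelimit_iff_succ_lt]
      constructor
      · intro h0
        have hle1 : c 1 ≤ γs := hcle 1
        rw [h0] at hle1
        have hc0 : c 0 = 0 := rfl
        have hc1pos : (0 : Ordinal) < c 1 := by
          rw [← hc0]; exact hcmono 0
        exact absurd hle1 (not_le.2 hc1pos)
      · intro a ha
        obtain ⟨n, hn⟩ := Ordinal.lt_iSup_iff.1 ha
        exact lt_of_le_of_lt (Order.succ_le_of_lt hn) (lt_of_lt_of_le (hcmono n) (hcle (n + 1)))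
    -- the contradiction
    have hgγs := hgspec γs hγsΩ hγslim
    have hb : g γs < γs := hgγs.2.2
    have hbΩ : g γs < (Cardinal.aleph 1).ord := hb.trans hγsΩ
    obtain ⟨n, hn⟩ := Ordinal.lt_iSup_iff.1 hb
    have hhb : h (g γs) ≤ γs := by
      have h1 : h (g γs) ≤ Ordinal.bsup.{uu,uu} (c n + 1) (fun b _ => h b) :=
        Ordinal.le_bsup.{uu,uu} _ (g γs) (lt_of_lt_of_le hn (by
          rw [Ordinal.add_one_eq_succ]; exact Order.le_succ _))
      exact le_trans (le_trans h1 (le_max_right _ _)) (by rw [← hcsucc]; exact hcle (n + 1))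
    exact absurd ((hh (g γs) hbΩ).2 γs hhb hγsΩ hγslim) (lt_irrefl _)
  obtain ⟨b₀, hb₀Ω, hU⟩ := hclaim
  -- the countable closure N
  set Nn : ℕ → Set Ordinal := fun n => Nat.rec (Set.Iic b₀ ∩ Set.Iio (Cardinal.aleph 1).ord)
    (fun _ s => s ∪ ⋃ ξ ∈ s, (φ ξ ∩ Set.Iio (Cardinal.aleph 1).ord)) n with hNndef
  have hNnsucc : ∀ n, Nn (n + 1) = Nn n ∪ ⋃ ξ ∈ Nn n,
      (φ ξ ∩ Set.Iio (Cardinal.aleph 1).ord) := fun n => rfl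
  have hIioctble : ∀ o : Ordinal, o < (Cardinal.aleph 1).ord → (Set.Iio o).Countable := by
    intro o ho
    rw [Cardinal.countable_iff_lt_aleph_one, Ordinal.mk_Iio_ordinal]
    rw [Cardinal.lift_lt_aleph_one]
    exact Cardinal.lt_ord.1 ho
  have hNctble : ∀ n, (Nn n).Countable := by
    intro n
    induction n with
    | zero =>
      have hsuc : b₀ + 1 < (Cardinal.aleph 1).ord := by
        rw [Ordinal.add_one_eq_succ]; exact hΩlim.succ_lt hb₀Ω
      have hsub0 : (Set.Iic b₀ ∩ Set.Iio (Cardinal.aleph 1).ord) ⊆ Set.Iio (b₀ + 1) := by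
        intro x hx
        rw [Set.mem_Iio, Ordinal.add_one_eq_succ, Order.lt_succ_iff]
        exact hx.1
      exact Set.Countable.mono hsub0 (hIioctble (b₀ + 1) hsuc)
    | succ n ih =>
      exact ih.union (ih.biUnion (fun ξ _ => ((hφfin ξ).inter_of_left _).countable))
  have hNsubΩ : ∀ n, Nn n ⊆ Set.Iio (Cardinal.aleph 1).ord := by
    intro n
    induction n with
    | zero => exact fun x hx => hx.2
    | succ n ih =>
      rw [hNnsucc]
      rintro x (hx | hx)
      · exact ih hx
      · obtain ⟨ξ, _, hx2⟩ := Set.mem_iUnion₂.1 hx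
        exact hx2.2
  set N := ⋃ n, Nn n with hNdef
  have hNctble' : N.Countable := Set.countable_iUnion hNctble
  have hNne : N.Nonempty := ⟨0, Set.mem_iUnion.2 ⟨0, Set.mem_inter (Set.mem_Iic.2 (zero_le (a := b₀))) hΩpos⟩⟩
  obtain ⟨e, he⟩ := hNctble'.exists_eq_range hNne
  set δ := iSup e with hδdef
  have hδΩ : δ < (Cardinal.aleph 1).ord := by
    rw [hδdef]
    apply Ordinal.iSup_lt_ord_lift
    · rw [Cardinal.mk_nat, Cardinal.lift_aleph0, hΩcof]
      exact Cardinal.aleph0_lt_aleph_one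
    · intro n
      have : e n ∈ N := by rw [he]; exact Set.mem_range_self n
      obtain ⟨k, hk⟩ := Set.mem_iUnion.1 this
      exact hNsubΩ k hk
  have hδbound : ∀ x, x ∈ N → x ≤ δ := by
    intro x hx
    rw [he] at hx
    obtain ⟨n, rfl⟩ := hx
    exact Ordinal.le_iSup e n
  -- pick a suitable γ
  have hxΩ : max b₀ δ + 1 + 1 < (Cardinal.aleph 1).ord := by
    have h1 : max b₀ δ < (Cardinal.aleph 1).ord := max_lt hb₀Ω hδΩ
    rw [Ordinal.add_one_eq_succ, Ordinal.add_one_eq_succ]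
    exact hΩlim.succ_lt (hΩlim.succ_lt h1)
  obtain ⟨γ, hγge, hγΩ, hγlim, hγg⟩ := hU (max b₀ δ + 1 + 1) hxΩ
  have hgγ := hgspec γ hγΩ hγlim
  -- C γ ⊆ N
  have hCN : ∀ α, α ∈ C γ → α ∈ N := by
    intro α
    induction α using Ordinal.induction with
    | h α IH =>
      intro hαC
      have hαγ : α < γ := hsub γ hγΩ hαC
      have hαΩ : α < (Cardinal.aleph 1).ord := hαγ.trans hγΩ
      by_cases hb : α ≤ b₀
      · exact Set.mem_iUnion.2 ⟨0, hb, hαΩ⟩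
      push_neg at hb
      have hgα : g γ < α := lt_of_le_of_lt hγg hb
      have hPne : (C γ ∩ Set.Iio α).Nonempty := ⟨g γ, hgγ.1, hgα⟩
      have hPfin : (C γ ∩ Set.Iio α).Finite := seg_finite (hmin γ hγΩ) hαC
      set p := sSup (C γ ∩ Set.Iio α) with hpdef
      have hpmem : p ∈ C γ ∩ Set.Iio α := hPne.csSup_mem hPfin
      have hpg : g γ ≤ p := le_csSup hPfin.bddAbove ⟨hgγ.1, hgα⟩
      have hpη : η γ ≤ p := le_of_lt (lt_of_lt_of_le hgγ.2.1 hpg)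
      have hmaxLp : maxL C Tr α γ = p := maxL_of_mem C Tr hTr_refl hTr_step hαC hαγ hγΩ
      have hr1 : α ∈ r1 C Tr p γ := ⟨hαγ, hmaxLp⟩
      have hφp : φ p = r1 C Tr p γ :=
        (hη γ hγΩ hγlim).2 p hpη (hpmem.2.trans hαγ)
      have hpN : p ∈ N := IH p hpmem.2 hpmem.1
      obtain ⟨n, hn⟩ := Set.mem_iUnion.1 hpN
      refine Set.mem_iUnion.2 ⟨n + 1, ?_⟩
      rw [hNnsucc]
      right
      exact Set.mem_biUnion hn ⟨hφp ▸ hr1, hαΩ⟩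
  -- contradiction: C γ is cofinal in γ but bounded by δ
  have hδγ : δ + 1 < γ := by
    apply lt_of_lt_of_le _ hγge
    have h1 : δ + 1 ≤ max b₀ δ + 1 := by
      rw [Ordinal.add_one_eq_succ, Ordinal.add_one_eq_succ]
      exact Order.succ_le_succ (le_max_right _ _)
    exact lt_of_le_of_lt h1 (by rw [Ordinal.add_one_eq_succ (max b₀ δ + 1)]; exact Order.lt_succ _)
  obtain ⟨y, hyC, hyge⟩ := hcof γ hγΩ (δ + 1) hδγ
  have hyδ : y ≤ δ := hδbound y (hCN y hyC)
  exact absurd hyge (not_le.2 (lt_of_le_of_lt hyδ (by rw [Ordinal.add_one_eq_succ]; exact Order.lt_succ _)))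

/-- For an ordertype-minimal C-sequence on `ω₁` and `r₁(α,γ) = {β < γ : max L(β,γ) = α}`:
each `r₁(α,γ)` is finite, and there is no finite-set-valued `φ` on `ω₁` such that for every
`γ < ω₁` of cofinality `ω` the functions `φ↾γ` and `r₁(·,γ)` agree on a tail of `γ`. -/
theorem r1_finite_and_nontrivial (C : Ordinal → Set Ordinal)
    (hsub : ∀ β < (Cardinal.aleph 1).ord, C β ⊆ Set.Iio β)
    (hcof : ∀ β < (Cardinal.aleph 1).ord, ∀ x < β, ∃ y ∈ C β, x ≤ y)
    (hclosed : ∀ β < (Cardinal.aleph 1).ord, ∀ x < β, (C β ∩ Set.Iio x).Nonempty →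
      sSup (C β ∩ Set.Iio x) = x → x ∈ C β)
    (hsucc : ∀ α, α + 1 < (Cardinal.aleph 1).ord → C (α + 1) = {α})
    (hmin : ∀ β < (Cardinal.aleph 1).ord, OtpLe (C β) Ordinal.omega0)
    (Tr : Ordinal → Ordinal → Set Ordinal)
    (hTr_refl : ∀ α < (Cardinal.aleph 1).ord, Tr α α = {α})
    (hTr_step : ∀ α β, α < β → β < (Cardinal.aleph 1).ord →
      Tr α β = insert β (Tr α (walkMin (C β) α))) :
    (∀ α γ, γ < (Cardinal.aleph 1).ord → (r1 C Tr α γ).Finite) ∧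
    ¬ ∃ φ : Ordinal → Set Ordinal, (∀ ξ, (φ ξ).Finite) ∧
      ∀ γ, γ < (Cardinal.aleph 1).ord → γ.cof = Cardinal.aleph0 →
        ∃ η < γ, ∀ β, η ≤ β → β < γ → φ β = r1 C Tr β γ := by
  constructor
  · intro α γ hγ
    exact r1_finite C hsub hcof hmin Tr hTr_step α γ hγ
  · exact r1_nontrivial C hsub hcof hmin Tr hTr_refl hTr_step
end

section
/- Fix n > 0 and an order-n C-sequence on an ordinal δ. For every nondecreasing (n+1)-tuple γ⃗ of ordinals below δ, the recursively-defined tree tr_n(γ⃗) is finite. (Each node of the recursion replaces one coordinate of the current (n+1)-tuple, and although a coordinate can be raised at certain steps, no infinite branch can exist.) -/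
open Classical in
/-- `l` is a `𝒞`-index: each entry is a member of the club indexed by the remaining tail. -/
def IsIndex (C : List Ordinal → Set Ordinal) : List Ordinal → Prop
  | [] => True
  | (a :: l) => IsIndex C l ∧ a ∈ C l

open Classical in
/-- The `𝒞`-maximal proper tail `τ(γ⃗)` of a tuple. -/
noncomputable def maxIdxTail (C : List Ordinal → Set Ordinal) : List Ordinal → List Ordinal
  | [] => []
  | (_ :: l) => if IsIndex C l then l else maxIdxTail C l

/-- `j = n − |τ(γ⃗)|`, the position of the coordinate `γ_j` being walked. -/
noncomputable def jIdx (C : List Ordinal → Set Ordinal) (l : List Ordinal) : ℕ :=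
  l.length - 1 - (maxIdxTail C l).length

/-- The coordinate `γ_j`. -/
noncomputable def pivot (C : List Ordinal → Set Ordinal) (l : List Ordinal) : Ordinal :=
  l.getD (jIdx C l) 0

/-- The output `min (C_{τ(γ⃗)} \ γ_j)` of the walk at the input `l`. -/
noncomputable def stepOut (C : List Ordinal → Set Ordinal) (l : List Ordinal) : Ordinal :=
  sInf (C (maxIdxTail C l) ∩ Set.Ici (pivot C l))

/-- The boundary condition `C_{τ(γ⃗)} \ γ_j = ∅`. -/
def IsBoundaryAt (C : List Ordinal → Set Ordinal) (l : List Ordinal) : Prop :=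
  C (maxIdxTail C l) ∩ Set.Ici (pivot C l) = ∅

/-- The `s`-th (0-indexed) deleted coordinate `i ∈ {1,…,n+1} \ {j+1}`. -/
def iOf (j s : ℕ) : ℕ := if s < j then s + 1 else s + 2

/-- The expanded `(n+2)`-tuple `(ι(γ⃗), min(C_{τ(γ⃗)} \ γ_j), τ(γ⃗))`. -/
noncomputable def expTuple (C : List Ordinal → Set Ordinal) (l : List Ordinal) : List Ordinal :=
  l.take (jIdx C l + 1) ++ stepOut C l :: maxIdxTail C l

/-- The `s`-th successor input of the walk at `l` (for `0 ≤ s < n`). -/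
noncomputable def childTuple (C : List Ordinal → Set Ordinal) (l : List Ordinal) (s : ℕ) :
    List Ordinal :=
  (expTuple C l).eraseIdx (iOf (jIdx C l) s)

/-- The input appearing at position `σ` of the tree of inputs of the walk starting at `l`. -/
noncomputable def walkNode (C : List Ordinal → Set Ordinal) :
    List Ordinal → List ℕ → List Ordinal
  | l, [] => l
  | l, (s :: σ) => walkNode C (childTuple C l s) σ

/-- `σ` indexes an actual node of the tree of inputs of the walk starting at `l`. -/
def ValidIdx (C : List Ordinal → Set Ordinal) : List Ordinal → List ℕ → Prop
  | _, [] => True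
  | l, (s :: σ) => ¬ IsBoundaryAt C l ∧ s < l.length - 1 ∧ ValidIdx C (childTuple C l s) σ

/-- The sign `±1` of the node at position `σ` of the walk starting at `l` with sign `k`. -/
noncomputable def nodeSign (C : List Ordinal → Set Ordinal) :
    ℤ → List Ordinal → List ℕ → ℤ
  | k, _, [] => k
  | k, l, (s :: σ) =>
      nodeSign C (k * (-1) ^ (iOf (jIdx C l) s + jIdx C l)) (childTuple C l s) σ

/-- Positions of the tree producing outputs (the nonterminal inputs). -/
def OutNodes (C : List Ordinal → Set Ordinal) (l : List Ordinal) : Set (List ℕ) :=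
  {σ | ValidIdx C l σ ∧ ¬ IsBoundaryAt C (walkNode C l σ)}

/-- Positions of the terminal (boundary) inputs of the walk: the multiset `𝔟Tr_n`. -/
def BdryNodes (C : List Ordinal → Set Ordinal) (l : List Ordinal) : Set (List ℕ) :=
  {σ | ValidIdx C l σ ∧ IsBoundaryAt C (walkNode C l σ)}

/-- `ρ₂ⁿ(γ⃗)`: the charge (positives minus negatives) of the signed tree `Tr_n(+, γ⃗)`. -/
noncomputable def rho2n (C : List Ordinal → Set Ordinal) (l : List Ordinal) : ℤ :=
  ∑ᶠ σ ∈ OutNodes C l, nodeSign C 1 l σ * (-1) ^ (jIdx C (walkNode C l σ))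

/-- `C` is an order-`n` C-sequence on `δ`: `C_∅ = δ` and, for each `𝒞`-index `β⃗` of length
`< n` and each `α ∈ C_{β⃗}`, `C_{αβ⃗}` is a closed cofinal subset of `α ∩ C_{β⃗}`. -/
def IsHigherC (n : ℕ) (δ : Ordinal) (C : List Ordinal → Set Ordinal) : Prop :=
  C [] = Set.Iio δ ∧
  ∀ l : List Ordinal, IsIndex C l → l.length < n → ∀ α ∈ C l,
    (C (α :: l) ⊆ C l ∩ Set.Iio α) ∧
    (∀ x ∈ C l ∩ Set.Iio α, ∃ y ∈ C (α :: l), x ≤ y) ∧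
    (∀ x ∈ C l ∩ Set.Iio α,
      (C (α :: l) ∩ Set.Iio x).Nonempty → sSup (C (α :: l) ∩ Set.Iio x) = x →
        x ∈ C (α :: l))

namespace HW

variable {C : List Ordinal → Set Ordinal}

lemma isIndex_of_suffix : ∀ {l t : List Ordinal}, IsIndex C l → t <:+ l → IsIndex C t := by
  intro l
  induction l with
  | nil => intro t h ht; rw [List.suffix_nil.mp ht]; trivial
  | cons a l ih =>
    intro t h ht
    rcases List.suffix_cons_iff.mp ht with rfl | ht'
    · exact h
    · exact ih h.1 ht'

lemma maxIdxTail_suffix : ∀ l : List Ordinal, maxIdxTail C l <:+ l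
  | [] => List.suffix_rfl
  | a :: l => by
      rw [maxIdxTail]
      split
      · exact List.suffix_cons a l
      · exact (maxIdxTail_suffix l).trans (List.suffix_cons a l)

lemma maxIdxTail_isIndex : ∀ l : List Ordinal, IsIndex C (maxIdxTail C l)
  | [] => trivial
  | a :: l => by
      rw [maxIdxTail]
      split
      · assumption
      · exact maxIdxTail_isIndex l

lemma maxIdxTail_length_lt : ∀ l : List Ordinal, l ≠ [] → (maxIdxTail C l).length < l.length
  | a :: l, _ => by
      rw [maxIdxTail]
      split
      · simp
      · rcases eq_or_ne l ([] : List Ordinal) with rfl | h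
        · simp [maxIdxTail]
        · exact (maxIdxTail_length_lt l h).trans (by simp)

lemma length_le_maxIdxTail : ∀ l t : List Ordinal, t <:+ l → t.length < l.length →
    IsIndex C t → t.length ≤ (maxIdxTail C l).length
  | a :: l, t, hsuf, hlen, hidx => by
      have ht : t <:+ l := by
        rcases List.suffix_cons_iff.mp hsuf with rfl | h
        · simp at hlen
        · exact h
      rw [maxIdxTail]
      split
      · exact ht.length_le
      · rcases eq_or_ne t l with rfl | hne
        · tauto
        · have : t.length < l.length :=
            lt_of_le_of_ne ht.length_le (fun h => hne (ht.eq_of_length h))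
          exact length_le_maxIdxTail l t ht this hidx

variable {n : ℕ} {δ : Ordinal}

lemma C_subset (hC : IsHigherC n δ C) {a t} (h : IsIndex C (a :: t)) (hlen : t.length < n) :
    C (a :: t) ⊆ C t ∩ Set.Iio a :=
  (hC.2 t h.1 hlen a h.2).1

lemma C_lt_delta (hC : IsHigherC n δ C) :
    ∀ t : List Ordinal, IsIndex C t → t.length ≤ n → C t ⊆ Set.Iio δ
  | [], _, _ => by rw [hC.1]
  | a :: t, h, hlen => by
      intro x hx
      have h1 : t.length < n := by simpa using hlen
      exact C_lt_delta hC t h.1 h1.le ((C_subset hC h h1 hx).1)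

lemma isIndex_getElem : ∀ (t : List Ordinal) (k : ℕ) (hk : k < t.length),
    IsIndex C t → t[k] ∈ C (t.drop (k + 1))
  | a :: t, 0, _, h => h.2
  | a :: t, k + 1, hk, h => isIndex_getElem t k (by simpa using hk) h.1

lemma getD_drop (l : List Ordinal) (k i : ℕ) : (l.drop k).getD i 0 = l.getD (k + i) 0 := by
  simp [List.getD_eq_getElem?_getD, List.getElem?_drop]

lemma setup (hC : IsHigherC n δ C) (hn : 0 < n) {l : List Ordinal}
    (hl : l.length = n + 1) (hδ : ∀ x ∈ l, x < δ) :
    1 ≤ (maxIdxTail C l).length ∧ (maxIdxTail C l).length ≤ n ∧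
      jIdx C l + (maxIdxTail C l).length = n ∧ l.drop (jIdx C l + 1) = maxIdxTail C l := by
  have hne : l ≠ [] := by intro h; rw [h] at hl; simp at hl
  have hlt : (maxIdxTail C l).length < n + 1 := hl ▸ maxIdxTail_length_lt l hne
  have h1 : 1 ≤ (maxIdxTail C l).length := by
    have hlen1 : (l.drop n).length = 1 := by simp [hl]
    obtain ⟨x, hx⟩ := List.length_eq_one_iff.mp hlen1
    have hxl : x ∈ l := List.drop_subset n l (hx ▸ List.mem_singleton_self x)
    have hidx : IsIndex C [x] := ⟨trivial, by rw [hC.1]; exact hδ x hxl⟩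
    have := length_le_maxIdxTail l [x] (hx ▸ List.drop_suffix n l)
      (by simp [hl]; omega) hidx
    simpa using this
  have hj : jIdx C l + (maxIdxTail C l).length = n := by
    rw [jIdx, hl]; omega
  refine ⟨h1, by omega, hj, ?_⟩
  obtain ⟨u, hu⟩ := maxIdxTail_suffix (C := C) l
  have hulen : u.length = jIdx C l + 1 := by
    have := congrArg List.length hu
    simp at this
    omega
  have h2 : List.drop u.length (u ++ maxIdxTail C l) = maxIdxTail C l := List.drop_left (l₁ := u)
  rw [hu, hulen] at h2
  exact h2

lemma key (hC : IsHigherC n δ C) (hn : 0 < n) {l : List Ordinal}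
    (hl : l.length = n + 1) (hδ : ∀ x ∈ l, x < δ) (hb : ¬ IsBoundaryAt C l)
    {s : ℕ} (hs : s < n) :
    (childTuple C l s).length = n + 1 ∧ (∀ x ∈ childTuple C l s, x < δ) ∧
    ∃ p, 1 ≤ p ∧ p ≤ n ∧ jIdx C (childTuple C l s) < p ∧ jIdx C l ≤ p ∧
      (childTuple C l s).getD p 0 < (if jIdx C l < p then l.getD p 0 else δ) ∧
      ∀ q, p < q → (childTuple C l s).getD q 0 = l.getD q 0 := by
  classical
  obtain ⟨hτ1, hτn, hjτ, hdrop⟩ := setup hC hn hl hδ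
  set τ := maxIdxTail C l with hτdef
  set j := jIdx C l with hjdef
  have hτidx : IsIndex C τ := maxIdxTail_isIndex l
  have hjn : j < n := by omega
  have hnemp : (C τ ∩ Set.Ici (pivot C l)).Nonempty := Set.nonempty_iff_ne_empty.mpr hb
  have hβmem : stepOut C l ∈ C τ ∩ Set.Ici (pivot C l) := csInf_mem hnemp
  set β := stepOut C l with hβdef
  have hβC : β ∈ C τ := hβmem.1
  have hβδ : β < δ := C_lt_delta hC τ hτidx hτn hβC
  have hτlen : τ.length = n - j := by omega
  set A := l.take (j + 1) with hAdef
  have hA : A.length = j + 1 := by rw [hAdef, List.length_take]; omega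
  have hexp : expTuple C l = A ++ β :: τ := rfl
  -- τ head facts
  have hτ0 : τ = τ[0]'(by omega) :: τ.drop 1 := by
    have := List.drop_eq_getElem_cons (l := τ) (i := 0) (by omega)
    simpa using this
  have hsubτ : C τ ⊆ C (τ.drop 1) ∩ Set.Iio (τ[0]'(by omega)) := by
    have h := C_subset hC (a := τ[0]'(by omega)) (t := τ.drop 1)
      (by rw [← hτ0]; exact hτidx) (by simp; omega)
    rwa [← hτ0] at h
  have hβlt0 : β < τ[0]'(by omega) := (hsubτ hβC).2
  have hβdrop1 : β ∈ C (τ.drop 1) := (hsubτ hβC).1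
  have hgetτ : ∀ q, j < q → l.getD q 0 = τ.getD (q - j - 1) 0 := by
    intro q hq
    rw [← hdrop, getD_drop]
    congr 1
    omega
  -- membership bound for children
  have hmemexp : ∀ x ∈ expTuple C l, x < δ := by
    intro x hx
    rw [hexp] at hx
    rcases List.mem_append.mp hx with h | h
    · exact hδ x (List.take_subset _ _ h)
    · rcases List.mem_cons.mp h with rfl | h
      · exact hβδ
      · exact hδ x ((maxIdxTail_suffix l).subset h)
  have hmemc : ∀ x ∈ childTuple C l s, x < δ := fun x hx =>
    hmemexp x (List.eraseIdx_subset hx)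
  rcases lt_or_ge s j with hsj | hjs
  · -- left case: delete a coordinate strictly before position j
    have hiOf : iOf j s = s + 1 := if_pos hsj
    have hchild : childTuple C l s = A.eraseIdx (s + 1) ++ β :: τ := by
      rw [childTuple, hiOf, hexp, List.eraseIdx_eq_take_drop_succ,
        List.take_append_of_le_length (by omega),
        List.drop_append_of_le_length (by omega),
        List.eraseIdx_eq_take_drop_succ, List.append_assoc]
    have hA' : (A.eraseIdx (s + 1)).length = j := by
      have := List.length_eraseIdx_add_one (l := A) (i := s + 1) (by omega)
      omega
    have hclen : (childTuple C l s).length = n + 1 := by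
      rw [hchild]
      simp [hA', hτlen]
      omega
    have hsufc : β :: τ <:+ childTuple C l s := ⟨A.eraseIdx (s + 1), hchild.symm⟩
    have hjc : jIdx C (childTuple C l s) < j := by
      have h1 := length_le_maxIdxTail (childTuple C l s) (β :: τ) hsufc
        (by simp [hclen, hτlen]; omega) ⟨hτidx, hβC⟩
      rw [jIdx, hclen]
      simp only [List.length_cons] at h1
      omega
    have hcget : ∀ q, j ≤ q → (childTuple C l s).getD q 0 = (β :: τ).getD (q - j) 0 := by
      intro q hq
      rw [hchild, List.getD_append_right _ _ _ _ (by omega), hA']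
    refine ⟨hclen, hmemc, j, by omega, by omega, hjc, le_rfl, ?_, ?_⟩
    · rw [if_neg (lt_irrefl j), hcget j le_rfl]
      simpa using hβδ
    · intro q hq
      rw [hcget q hq.le, show q - j = (q - j - 1) + 1 by omega, List.getD_cons_succ,
        ← hgetτ q hq]
  · -- right case: delete a coordinate in the tail τ
    set m := s - j with hmdef
    have hm : m < τ.length := by omega
    have hiOf : iOf j s = s + 2 := if_neg (by omega)
    have hchild : childTuple C l s = A ++ β :: τ.eraseIdx m := by
      rw [childTuple, hiOf, hexp]
      have h1 : s + 2 = A.length + (m + 1) := by rw [hA]; omega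
      rw [h1, List.eraseIdx_eq_take_drop_succ, List.take_length_add_append,
        show A.length + (m + 1) + 1 = A.length + (m + 2) by omega, List.drop_length_add_append,
        List.append_assoc]
      congr 1
      rw [show (β :: τ).take (m + 1) = β :: τ.take m by simp,
        show (β :: τ).drop (m + 2) = τ.drop (m + 1) by simp,
        List.eraseIdx_eq_take_drop_succ]
      simp
    have hτe : (τ.eraseIdx m).length = n - j - 1 := by
      have := List.length_eraseIdx_add_one (l := τ) (i := m) hm
      omega
    have hclen : (childTuple C l s).length = n + 1 := by
      rw [hchild]
      simp [hA, hτe]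
      omega
    have hcget : ∀ q, j + 1 ≤ q →
        (childTuple C l s).getD q 0 = (β :: τ.eraseIdx m).getD (q - (j + 1)) 0 := by
      intro q hq
      rw [hchild, List.getD_append_right _ _ _ _ (by omega), hA]
    have heq : ∀ q, s + 1 < q → (childTuple C l s).getD q 0 = l.getD q 0 := by
      intro q hq
      rw [hcget q (by omega), show q - (j + 1) = (q - j - 2) + 1 by omega,
        List.getD_cons_succ, List.eraseIdx_eq_take_drop_succ,
        List.getD_append_right _ _ _ _ (by simp [List.length_take]; omega),
        getD_drop, hgetτ q (by omega)]
      congr 1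
      simp [List.length_take]
      omega
    rcases Nat.eq_zero_or_pos m with hm0 | hm1
    · -- m = 0 : delete the head of τ
      have hτe0 : τ.eraseIdx m = τ.drop 1 := by
        rw [hm0, List.eraseIdx_eq_take_drop_succ]
        simp
      have hsufc : β :: τ.drop 1 <:+ childTuple C l s := ⟨A, by rw [hchild, hτe0]⟩
      have hidxc : IsIndex C (β :: τ.drop 1) :=
        ⟨isIndex_of_suffix hτidx (List.drop_suffix 1 τ), hβdrop1⟩
      have hjc : jIdx C (childTuple C l s) < s + 1 := by
        have h1 := length_le_maxIdxTail (childTuple C l s) (β :: τ.drop 1) hsufc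
          (by simp [hclen]; omega) hidxc
        rw [jIdx, hclen]
        simp only [List.length_cons, List.length_drop] at h1
        omega
      have hp : s + 1 = j + 1 := by omega
      refine ⟨hclen, hmemc, s + 1, by omega, by omega, hjc, by omega, ?_, heq⟩
      rw [if_pos (by omega), hcget (s + 1) (by omega), hp]
      simp only [Nat.add_sub_cancel_left, Nat.sub_self, List.getD_cons_zero]
      rw [hgetτ (j + 1) (by omega)]
      simp only [Nat.add_sub_cancel_left, Nat.sub_self]
      rw [List.getD_eq_getElem (l := τ) (n := 0) (d := 0) (by omega)]
      exact hβlt0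
    · -- m ≥ 1 : delete τ[m], exposing τ[m-1]
      have hm1' : m - 1 < τ.length := by omega
      have hdropm : τ.drop m = τ[m]'hm :: τ.drop (m + 1) := List.drop_eq_getElem_cons hm
      have hgm1 : τ[m-1]'hm1' ∈ C (τ.drop m) := by
        have := isIndex_getElem τ (m - 1) hm1' hτidx
        rwa [show m - 1 + 1 = m by omega] at this
      have hsubm : C (τ.drop m) ⊆ C (τ.drop (m + 1)) ∩ Set.Iio (τ[m]'hm) := by
        have h := C_subset hC (a := τ[m]'hm) (t := τ.drop (m + 1))
          (by rw [← hdropm]; exact isIndex_of_suffix hτidx (List.drop_suffix m τ))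
          (by simp; omega)
        rwa [← hdropm] at h
      have hlt : τ[m-1]'hm1' < τ[m]'hm := (hsubm hgm1).2
      have hidxc : IsIndex C (τ[m-1]'hm1' :: τ.drop (m + 1)) :=
        ⟨isIndex_of_suffix hτidx (List.drop_suffix (m + 1) τ), (hsubm hgm1).1⟩
      have htake : τ.take m = τ.take (m - 1) ++ [τ[m-1]'hm1'] := by
        have := List.take_concat_get' τ (m - 1) hm1'
        rw [show m - 1 + 1 = m by omega] at this
        exact this.symm
      have hsufc : τ[m-1]'hm1' :: τ.drop (m + 1) <:+ childTuple C l s := by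
        refine ⟨A ++ β :: τ.take (m - 1), ?_⟩
        rw [hchild, List.eraseIdx_eq_take_drop_succ, htake]
        simp only [List.cons_append, List.append_assoc, List.nil_append]
      have hjc : jIdx C (childTuple C l s) < s + 1 := by
        have h1 := length_le_maxIdxTail (childTuple C l s) _ hsufc
          (by simp [hclen]; omega) hidxc
        rw [jIdx, hclen]
        simp only [List.length_cons, List.length_drop] at h1
        omega
      refine ⟨hclen, hmemc, s + 1, by omega, by omega, hjc, by omega, ?_, heq⟩
      rw [if_pos (by omega), hcget (s + 1) (by omega),
        show s + 1 - (j + 1) = (m - 1) + 1 by omega, List.getD_cons_succ,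
        List.eraseIdx_eq_take_drop_succ,
        List.getD_append _ _ _ _ (by simp [List.length_take]; omega),
        hgetτ (s + 1) (by omega), show s + 1 - j - 1 = m by omega,
        List.getD_eq_getElem (l := τ.take m) (n := m - 1) (d := 0)
          (by simp [List.length_take]; omega),
        List.getD_eq_getElem (l := τ) (n := m) (d := 0) (by omega)]
      simpa using hlt

end HW

/-- Fix `n > 0` and an order-`n` C-sequence on an ordinal `δ`.  For every nondecreasing
`(n+1)`-tuple `γ⃗` of ordinals below `δ`, the recursively-defined tree `tr_n(γ⃗)` of inputs
of the higher walk is finite: the set of positions of its nodes is finite. -/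


theorem higher_walk_tree_finite (n : ℕ) (hn : 0 < n) (δ : Ordinal)
    (C : List Ordinal → Set Ordinal) (hC : IsHigherC n δ C) :
    ∀ l : List Ordinal, l.length = n + 1 → l.Pairwise (· ≤ ·) → (∀ x ∈ l, x < δ) →
      {σ : List ℕ | ValidIdx C l σ}.Finite := by
  classical
  set W : List Ordinal → Fin n → Ordinal := fun l k =>
    if jIdx C l < n - (k : ℕ) then l.getD (n - (k : ℕ)) 0 else δ with hW
  have wfR : WellFounded
      (Pi.Lex (· < ·) (fun {_ : Fin n} => ((· < ·) : Ordinal → Ordinal → Prop))) :=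
    Pi.Lex.wellFounded (· < ·) fun _ => wellFounded_lt
  suffices H : ∀ w : Fin n → Ordinal, ∀ l : List Ordinal, W l = w → l.length = n + 1 →
      (∀ x ∈ l, x < δ) → {σ : List ℕ | ValidIdx C l σ}.Finite by
    intro l hl _ hδ
    exact H (W l) l rfl hl hδ
  intro w
  refine wfR.induction (C := fun w => ∀ l : List Ordinal, W l = w → l.length = n + 1 →
      (∀ x ∈ l, x < δ) → {σ : List ℕ | ValidIdx C l σ}.Finite) w ?_
  clear w
  intro w ih l hWl hl hδ
  by_cases hb : IsBoundaryAt C l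
  · refine Set.Finite.subset (Set.finite_singleton ([] : List ℕ)) ?_
    rintro (_ | ⟨s, σ⟩) hσ
    · exact Set.mem_singleton _
    · exact absurd hσ.1 (not_not_intro hb)
  · have hstep : ∀ s : ℕ, s < n → {σ : List ℕ | ValidIdx C (childTuple C l s) σ}.Finite := by
      intro s hs
      obtain ⟨hclen, hcmem, p, hp1, hpn, hjcp, hjlp, hlt, heq⟩ := HW.key hC hn hl hδ hb hs
      have hdec : Pi.Lex (· < ·) (fun {_ : Fin n} => ((· < ·) : Ordinal → Ordinal → Prop))
          (W (childTuple C l s)) (W l) := by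
        refine ⟨⟨n - p, by omega⟩, ?_, ?_⟩
        · intro k hk
          have hk' : (k : ℕ) < n - p := hk
          have hq : p < n - (k : ℕ) := by omega
          simp only [hW]
          rw [if_pos (by omega), if_pos (by omega)]
          exact heq _ hq
        · simp only [hW]
          show (if jIdx C (childTuple C l s) < n - (n - p) then _ else _) <
            (if jIdx C l < n - (n - p) then _ else _)
          rw [show n - (n - p) = p by omega, if_pos (by omega)]
          exact hlt
      exact ih (W (childTuple C l s)) (hWl ▸ hdec) _ rfl hclen hcmem
    have hsub : {σ : List ℕ | ValidIdx C l σ} ⊆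
        insert [] (⋃ s ∈ Finset.range n,
          (List.cons s) '' {σ | ValidIdx C (childTuple C l s) σ}) := by
      rintro (_ | ⟨s, σ⟩) hσ
      · exact Set.mem_insert _ _
      · refine Set.mem_insert_of_mem _ ?_
        have hsn : s < n := by have := hσ.2.1; omega
        exact Set.mem_biUnion (Finset.mem_coe.mpr (Finset.mem_range.mpr hsn)) ⟨σ, hσ.2.2, rfl⟩
    exact Set.Finite.subset
      (Set.Finite.insert _ (Set.Finite.biUnion (Finset.range n).finite_toSet
        fun s hs => (hstep s (Finset.mem_range.mp hs)).image _)) hsub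
end

section
/- For all n > 0, any order-n C-sequence on ε, any γ⃗ ∈ ε^{[n]}, any β ≤ γ₀, and any α ∈ (max L_n(β,γ⃗), β], the tree Tr_n(±, α, γ⃗) end-extends the tree Tr_n(±, β, γ⃗): the initial portion of the walk with first coordinate α is identical to the full walk with first coordinate β (with α replacing β), node by node, with the same signs and outputs. -/
section Aux

lemma mt_len (C : List Ordinal → Set Ordinal) : ∀ l, (maxIdxTail C l).length ≤ l.length
  | [] => le_refl _
  | a :: l => by
      unfold maxIdxTail; split
      · exact Nat.le_succ _
      · exact (mt_len C l).trans (Nat.le_succ _)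

lemma mt_cons_len (C : List Ordinal → Set Ordinal) (x : Ordinal) (t : List Ordinal) :
    (maxIdxTail C (x :: t)).length ≤ t.length := by
  unfold maxIdxTail; split
  · exact le_refl _
  · exact mt_len C t

lemma jIdx_cons (C : List Ordinal → Set Ordinal) (x : Ordinal) (t : List Ordinal) :
    jIdx C (x :: t) = t.length - (maxIdxTail C (x :: t)).length := by
  simp [jIdx]

lemma jIdx_zero (C : List Ordinal → Set Ordinal) (x : Ordinal) (t : List Ordinal)
    (htne : t ≠ []) (h0 : jIdx C (x :: t) = 0) :
    IsIndex C t ∧ maxIdxTail C (x :: t) = t := by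
  by_cases h : IsIndex C t
  · exact ⟨h, by simp [maxIdxTail, h]⟩
  · exfalso
    have hm : maxIdxTail C (x :: t) = maxIdxTail C t := by simp [maxIdxTail, h]
    rw [jIdx_cons, hm] at h0
    cases t with
    | nil => exact htne rfl
    | cons a t' =>
        have h1 : (maxIdxTail C (a :: t')).length ≤ t'.length := mt_cons_len C a t'
        simp only [List.length_cons] at h0
        omega

lemma bdd_club (n : ℕ) (hn : 0 < n) (ε : Ordinal) (C : List Ordinal → Set Ordinal)
    (hC : IsHigherC n ε C) (t : List Ordinal) (ht : t.length = n) (hidx : IsIndex C t) :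
    BddAbove (C t) := by
  cases t with
  | nil => simp at ht; omega
  | cons a t' =>
      obtain ⟨h1, h2⟩ := hidx
      have hsub := (hC.2 t' h1 (by simp at ht; omega) a h2).1
      exact bddAbove_Iio.mono (hsub.trans Set.inter_subset_right)

lemma key_set (n : ℕ) (hn : 0 < n) (ε : Ordinal) (C : List Ordinal → Set Ordinal)
    (hC : IsHigherC n ε C) (α β : Ordinal) (hαβ : α ≤ β)
    (t : List Ordinal) (ht : t.length = n)
    (hsup : IsIndex C t → sSup (C t ∩ Set.Iio β) < α) :
    C (maxIdxTail C (α :: t)) ∩ Set.Ici (pivot C (α :: t))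
      = C (maxIdxTail C (β :: t)) ∩ Set.Ici (pivot C (β :: t)) := by
  have hm : maxIdxTail C (α :: t) = maxIdxTail C (β :: t) := rfl
  have hj : jIdx C (α :: t) = jIdx C (β :: t) := rfl
  rcases Nat.eq_zero_or_pos (jIdx C (β :: t)) with h0 | hpos
  · have htne : t ≠ [] := by intro h; rw [h] at ht; simp at ht; omega
    obtain ⟨hIt, hmt⟩ := jIdx_zero C β t htne h0
    have pα : pivot C (α :: t) = α := by
      simp [pivot, hj, h0]
    have pβ : pivot C (β :: t) = β := by
      simp [pivot, h0]
    rw [hm, pα, pβ, hmt]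
    have hb : BddAbove (C t ∩ Set.Iio β) :=
      (bdd_club n hn ε C hC t ht hIt).mono Set.inter_subset_left
    ext x
    simp only [Set.mem_inter_iff, Set.mem_Ici]
    constructor
    · rintro ⟨hx, hxα⟩
      refine ⟨hx, ?_⟩
      by_contra h
      push_neg at h
      exact absurd (le_csSup hb ⟨hx, h⟩) (not_le.2 (lt_of_lt_of_le (hsup hIt) hxα))
    · rintro ⟨hx, hxβ⟩
      exact ⟨hx, hαβ.trans hxβ⟩
  · obtain ⟨k, hk⟩ : ∃ k, jIdx C (β :: t) = k + 1 := ⟨_, (Nat.succ_pred_eq_of_pos hpos).symm⟩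
    have pα : pivot C (α :: t) = t.getD k 0 := by simp [pivot, hj, hk]
    have pβ : pivot C (β :: t) = t.getD k 0 := by simp [pivot, hk]
    rw [hm, pα, pβ]

lemma iOf_succ (j s : ℕ) : iOf j s = (if s < j then s else s + 1) + 1 := by
  unfold iOf; split <;> rfl

lemma childTuple_cons (C : List Ordinal → Set Ordinal) (x : Ordinal) (t : List Ordinal) (s : ℕ) :
    childTuple C (x :: t) s =
      x :: (t.take (jIdx C (x :: t)) ++ stepOut C (x :: t) :: maxIdxTail C (x :: t)).eraseIdx
        (if s < jIdx C (x :: t) then s else s + 1) := by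
  unfold childTuple expTuple
  rw [iOf_succ, List.take_succ_cons, List.cons_append, List.eraseIdx_cons_succ]

end Aux

lemma walk_ext (n : ℕ) (hn : 0 < n) (ε : Ordinal) (C : List Ordinal → Set Ordinal)
    (hC : IsHigherC n ε C) (α β : Ordinal) (hαβ : α ≤ β) :
    ∀ (σ : List ℕ) (t : List Ordinal), t.length = n →
    (∀ σ' : List ℕ, ValidIdx C (β :: t) σ' → IsIndex C ((walkNode C (β :: t) σ').tail) →
      sSup (C ((walkNode C (β :: t) σ').tail) ∩ Set.Iio β) < α) →
    ValidIdx C (β :: t) σ →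
    ∃ u : List Ordinal, u.length = n ∧
      walkNode C (α :: t) σ = α :: u ∧ walkNode C (β :: t) σ = β :: u ∧
      ValidIdx C (α :: t) σ ∧
      (IsBoundaryAt C (α :: u) ↔ IsBoundaryAt C (β :: u)) ∧
      stepOut C (α :: u) = stepOut C (β :: u) ∧
      ∀ k : ℤ, nodeSign C k (α :: t) σ = nodeSign C k (β :: t) σ := by
  intro σ
  induction σ with
  | nil =>
      intro t ht hsup _
      have hkey := key_set n hn ε C hC α β hαβ t ht
        (fun hi => hsup [] trivial (by simpa [walkNode] using hi))
      refine ⟨t, ht, rfl, rfl, trivial, ?_, ?_, fun k => rfl⟩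
      · unfold IsBoundaryAt
        rw [hkey]
      · unfold stepOut
        rw [hkey]
  | cons s σ IH =>
      intro t ht hsup hv
      obtain ⟨hb, hs, hv'⟩ := hv
      have hkey := key_set n hn ε C hC α β hαβ t ht
        (fun hi => hsup [] trivial (by simpa [walkNode] using hi))
      have hm : maxIdxTail C (α :: t) = maxIdxTail C (β :: t) := rfl
      have hj : jIdx C (α :: t) = jIdx C (β :: t) := rfl
      have hso : stepOut C (α :: t) = stepOut C (β :: t) := by
        unfold stepOut; rw [hkey]
      set j := jIdx C (β :: t) with hjdef
      set m := maxIdxTail C (β :: t) with hmdef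
      set i := if s < j then s else s + 1 with hidef
      set u₀ := (t.take j ++ stepOut C (β :: t) :: m).eraseIdx i with hu₀def
      have hcβ : childTuple C (β :: t) s = β :: u₀ := childTuple_cons C β t s
      have hcα : childTuple C (α :: t) s = α :: u₀ := by
        rw [childTuple_cons C α t s, hj, hm, hso]
      have hsn : s < n := by
        simp only [List.length_cons, ht] at hs
        omega
      have hmle : m.length ≤ t.length := mt_cons_len C β t
      have hjm : j = t.length - m.length := jIdx_cons C β t
      have hu₀ : u₀.length = n := by
        rw [hu₀def, List.length_eraseIdx_of_lt]
        · simp only [List.length_append, List.length_take, List.length_cons]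
          omega
        · simp only [List.length_append, List.length_take, List.length_cons]
          rw [hidef]
          split <;> omega
      have hsup' : ∀ σ' : List ℕ, ValidIdx C (β :: u₀) σ' →
          IsIndex C ((walkNode C (β :: u₀) σ').tail) →
          sSup (C ((walkNode C (β :: u₀) σ').tail) ∩ Set.Iio β) < α := by
        intro σ' hvv hii
        have hwn : walkNode C (β :: t) (s :: σ') = walkNode C (β :: u₀) σ' := by
          show walkNode C (childTuple C (β :: t) s) σ' = _
          rw [hcβ]
        have := hsup (s :: σ') ⟨hb, hs, by rw [hcβ]; exact hvv⟩ (by rw [hwn]; exact hii)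
        rwa [hwn] at this
      rw [hcβ] at hv'
      obtain ⟨u, hu, wα, wβ, vα, bdr, so, sg⟩ := IH u₀ hu₀ hsup' hv'
      refine ⟨u, hu, ?_, ?_, ?_, bdr, so, ?_⟩
      · show walkNode C (childTuple C (α :: t) s) σ = _
        rw [hcα, wα]
      · show walkNode C (childTuple C (β :: t) s) σ = _
        rw [hcβ, wβ]
      · refine ⟨fun h => hb ?_, ?_, ?_⟩
        · unfold IsBoundaryAt at h ⊢
          rw [← hkey]
          exact h
        · simpa only [List.length_cons] using hs
        · rw [hcα]; exact vα
      · intro k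
        show nodeSign C (k * (-1) ^ (iOf (jIdx C (α :: t)) s + jIdx C (α :: t)))
            (childTuple C (α :: t) s) σ = nodeSign C (k * (-1) ^ (iOf (jIdx C (β :: t)) s + jIdx C (β :: t)))
            (childTuple C (β :: t) s) σ
        rw [hj, hcα, hcβ]
        exact sg _

/-- For all `n > 0`, any order-`n` C-sequence on `ε`, any `γ⃗ ∈ ε^{[n]}`, any `β ≤ γ₀` and
any `α ∈ (max L_n(β,γ⃗), β]`, the signed tree `Tr_n(±,α,γ⃗)` end-extends the signed tree
`Tr_n(±,β,γ⃗)`: its initial portion is identical, node by node, to the full walk with first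
coordinate `β` — with `α` everywhere replacing `β` in the first coordinate — with the same
signs and the same outputs. -/
theorem higher_walk_end_extension (n : ℕ) (hn : 0 < n) (ε : Ordinal)
    (C : List Ordinal → Set Ordinal) (hC : IsHigherC n ε C)
    (g : List Ordinal) (hg : g.length = n) (hgs : g.Pairwise (· ≤ ·)) (hgε : ∀ x ∈ g, x < ε)
    (β : Ordinal) (hβg : β ≤ g.headI) (α : Ordinal) (hα0 : 0 < α) (hαβ : α ≤ β)
    (hαL : ∀ σ : List ℕ, ValidIdx C (β :: g) σ →
      IsIndex C ((walkNode C (β :: g) σ).tail) →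
        sSup (C ((walkNode C (β :: g) σ).tail) ∩ Set.Iio β) < α) :
    ∀ σ : List ℕ, ValidIdx C (β :: g) σ →
      ValidIdx C (α :: g) σ ∧
      walkNode C (α :: g) σ = α :: (walkNode C (β :: g) σ).tail ∧
      (IsBoundaryAt C (walkNode C (α :: g) σ) ↔ IsBoundaryAt C (walkNode C (β :: g) σ)) ∧
      stepOut C (walkNode C (α :: g) σ) = stepOut C (walkNode C (β :: g) σ) ∧
      nodeSign C 1 (α :: g) σ = nodeSign C 1 (β :: g) σ := by
  intro σ hσ
  obtain ⟨u, hu, wα, wβ, vα, bdr, so, sg⟩ :=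
    walk_ext n hn ε C hC α β hαβ σ g hg hαL hσ
  refine ⟨vα, ?_, ?_, ?_, sg 1⟩
  · rw [wα, wβ, List.tail_cons]
  · rw [wα, wβ]; exact bdr
  · rw [wα, wβ]; exact so
end

section
/- For n > 1, the boundary map ∂_n applied to any nondegenerate expansion step of a Tr_n-term is conserved: ∂_n Tr_n((−1)^k, ι(γ⃗), τ(γ⃗)) equals ∂_n of the disjoint union ⊔_{i ∈ {1,…,n+1} \ {j+1}} Tr_n((−1)^{i+j+k}, (ι(γ⃗), min(C_{τ(γ⃗)} \ γ_j), τ(γ⃗))^i). Consequently, if a finite collection of Tr_n-terms is cyclic (has total ∂_n equal to 0), the collection of its boundary terms is cyclic as well. -/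
/-- The boundary map `∂_n` of a signed `(n+1)`-tuple `(k, ξ :: γ⃗)`:
`Σ_{i<n} (−1)^i · k · ⌊γ⃗^i⌋` in the free abelian group on tuples of ordinals. -/
noncomputable def bdryMap (k : ℤ) (l : List Ordinal) : (List Ordinal →₀ ℤ) :=
  ∑ i ∈ Finset.range l.tail.length, Finsupp.single (l.tail.eraseIdx i) ((-1) ^ i * k)

/- ## list helpers -/

lemma eraseIdx_append_left {α : Type*} : ∀ (u v : List α) (i : ℕ), i < u.length →
    (u ++ v).eraseIdx i = u.eraseIdx i ++ v
  | [], _, i, h => by simp at h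
  | (a :: u), v, 0, h => by simp
  | (a :: u), v, (i+1), h => by
      simp only [List.cons_append, List.eraseIdx_cons_succ, eraseIdx_append_left u v i
        (by simpa using h)]

lemma eraseIdx_append_right {α : Type*} : ∀ (u v : List α) (i : ℕ),
    (u ++ v).eraseIdx (u.length + i) = u ++ v.eraseIdx i
  | [], v, i => by simp
  | (a :: u), v, i => by
      simp only [List.cons_append, List.length_cons]
      have : a :: u ++ v = a :: (u ++ v) := rfl
      rw [show u.length + 1 + i = (u.length + i) + 1 by omega, List.eraseIdx_cons_succ,
        eraseIdx_append_right u v i]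

lemma suffix_drop_eq {α : Type*} {s l : List α} (h : s <:+ l) :
    l.drop (l.length - s.length) = s := by
  obtain ⟨u, rfl⟩ := h
  simp [List.drop_left']

lemma suffix_tail_of_ne {α : Type*} {s t : List α} (h : s <:+ t) (hne : s ≠ t) :
    s <:+ t.tail := by
  obtain ⟨u, rfl⟩ := h
  rcases u with _ | ⟨a, u⟩
  · simp at hne
  · rw [List.cons_append, List.tail_cons]; exact ⟨u, rfl⟩

lemma eraseIdx_comm {α : Type*} : ∀ (t : List α) (i q : ℕ), i < q →
    (t.eraseIdx q).eraseIdx i = (t.eraseIdx i).eraseIdx (q-1)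
  | [], i, q, h => by simp
  | (a :: t), i, (q+1), h => by
      rcases i with _ | i
      · simp
      · rw [List.eraseIdx_cons_succ, List.eraseIdx_cons_succ, List.eraseIdx_cons_succ,
          Nat.add_sub_cancel, eraseIdx_comm t i q (by omega),
          show (a :: (t.eraseIdx i)).eraseIdx q = a :: (t.eraseIdx i).eraseIdx (q-1) from by
            rw [show q = (q-1)+1 by omega, List.eraseIdx_cons_succ, Nat.add_sub_cancel]]

/- ## simplicial identity -/

lemma simplicial (t : List Ordinal) :
    ∑ q ∈ Finset.range t.length, ∑ i ∈ Finset.range (t.length - 1),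
      Finsupp.single ((t.eraseIdx q).eraseIdx i) ((-1:ℤ)^(q+i)) = 0 := by
  classical
  obtain ⟨L, hL⟩ : ∃ L, t.length = L := ⟨_, rfl⟩
  rw [hL, ← Finset.sum_product']
  set s := Finset.range L ×ˢ Finset.range (L-1) with hs
  set F : ℕ × ℕ → (List Ordinal →₀ ℤ) :=
    fun p => Finsupp.single ((t.eraseIdx p.1).eraseIdx p.2) ((-1:ℤ)^(p.1+p.2)) with hF
  have hsplit := Finset.sum_filter_add_sum_filter_not s (fun p => p.2 < p.1) F
  have hneg : ∑ p ∈ s.filter (fun p => p.2 < p.1), F p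
      = ∑ p ∈ s.filter (fun p => ¬ p.2 < p.1), (- F p) := by
    refine Finset.sum_nbij' (fun p => (p.2, p.1 - 1)) (fun p => (p.2 + 1, p.1)) ?_ ?_ ?_ ?_ ?_
    · rintro ⟨q, i⟩ hp
      simp only [Finset.mem_filter, hs, Finset.mem_product, Finset.mem_range] at hp ⊢
      omega
    · rintro ⟨q, i⟩ hp
      simp only [Finset.mem_filter, hs, Finset.mem_product, Finset.mem_range] at hp ⊢
      omega
    · rintro ⟨q, i⟩ hp
      simp only [Finset.mem_filter, hs, Finset.mem_product, Finset.mem_range] at hp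
      dsimp only
      rw [Prod.mk.injEq]
      omega
    · rintro ⟨q, i⟩ hp
      simp only [Finset.mem_filter, hs, Finset.mem_product, Finset.mem_range] at hp
      dsimp only
      rw [Prod.mk.injEq]
      omega
    · rintro ⟨q, i⟩ hp
      simp only [Finset.mem_filter, hs, Finset.mem_product, Finset.mem_range] at hp
      simp only [hF]
      rw [eraseIdx_comm t i q hp.2, ← Finsupp.single_neg]
      congr 1
      have : q + i = (i + (q - 1)) + 1 := by omega
      rw [this, pow_succ]
      ring
  rw [Finset.sum_neg_distrib] at hneg
  rw [← hsplit, hneg]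
  exact neg_add_cancel _

/- ## maxIdxTail basics -/

lemma maxIdxTail_suffix (C : List Ordinal → Set Ordinal) : ∀ l, maxIdxTail C l <:+ l.tail
  | [] => by simp [maxIdxTail]
  | (a :: l) => by
      rw [maxIdxTail]
      split
      · exact List.suffix_refl l
      · exact (maxIdxTail_suffix C l).trans (List.tail_suffix l)

lemma maxIdxTail_isIndex (C : List Ordinal → Set Ordinal) : ∀ l, IsIndex C (maxIdxTail C l)
  | [] => by rw [maxIdxTail]; trivial
  | (a :: l) => by
      rw [maxIdxTail]
      split
      · assumption
      · exact maxIdxTail_isIndex C l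

lemma maxIdxTail_maximal (C : List Ordinal → Set Ordinal) :
    ∀ l s, s <:+ l.tail → IsIndex C s → s <:+ maxIdxTail C l
  | [], s, hs, _ => by simpa [maxIdxTail] using hs
  | (a :: l), s, hs, hidx => by
      rw [maxIdxTail]
      split
      · exact hs
      · rename_i hni
        have hne : s ≠ l := by rintro rfl; exact hni hidx
        exact maxIdxTail_maximal C l s (suffix_tail_of_ne hs hne) hidx

/- ## Part 1 : conservation -/

lemma conserved (n : ℕ) (C : List Ordinal → Set Ordinal) (k : ℤ) (l : List Ordinal)
    (hl : l.length = n + 1) :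
    bdryMap k l = ∑ s ∈ Finset.range n,
      bdryMap (k * (-1) ^ (iOf (jIdx C l) s + jIdx C l)) (childTuple C l s) := by
  classical
  rcases l with _ | ⟨a, l'⟩
  · simp at hl
  have hl' : l'.length = n := by simpa using hl
  set τ := maxIdxTail C (a :: l') with hτdef
  have hτ : τ <:+ l' := maxIdxTail_suffix C (a :: l')
  have hm : τ.length ≤ n := hl' ▸ hτ.length_le
  have hj : jIdx C (a :: l') = n - τ.length := by
    simp [jIdx, hl, ← hτdef]
  set j := jIdx C (a :: l') with hjdef
  set ξ := stepOut C (a :: l') with hξdef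
  have hdrop' : l'.drop j = τ := by
    have h2 := suffix_drop_eq hτ
    rw [hl'] at h2
    rw [hj]
    exact h2
  have he : expTuple C (a :: l') = a :: (l'.take j ++ ξ :: τ) := by
    rw [expTuple, ← hjdef, ← hξdef, ← hτdef, List.take_succ_cons, List.cons_append]
  set t := l'.take j ++ ξ :: τ with ht
  have hjn : j ≤ n := by omega
  have hjtk : (l'.take j).length = j := by
    rw [List.length_take, hl']; omega
  have htlen : t.length = n + 1 := by
    have hτl : τ.length = n - j := by omega
    simp [ht, hjtk, hτl]; omega
  have htail_l : l' = t.eraseIdx j := by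
    have h4 := eraseIdx_append_right (l'.take j) (ξ :: τ) 0
    rw [Nat.add_zero, hjtk, List.eraseIdx_cons_zero] at h4
    conv_lhs => rw [← List.take_append_drop j l', hdrop']
    rw [ht, h4]
  have hchild : ∀ s, childTuple C (a :: l') s = a :: t.eraseIdx (iOf j s - 1) := by
    intro s
    rw [childTuple, he, ← hjdef, show iOf j s = (iOf j s - 1) + 1 by unfold iOf; split <;> omega,
      List.eraseIdx_cons_succ]
    simp
  have hlen_erase : ∀ q, q < n + 1 → (t.eraseIdx q).length = n := by
    intro q hq
    rw [List.length_eraseIdx]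
    rw [htlen]
    simp [hq]
  set H : ℕ → (List Ordinal →₀ ℤ) :=
    fun q => ∑ i ∈ Finset.range n, Finsupp.single ((t.eraseIdx q).eraseIdx i) ((-1:ℤ)^(q+i))
    with hHdef
  have hH : ∀ (c : ℤ) q, (∑ i ∈ Finset.range n,
      Finsupp.single ((t.eraseIdx q).eraseIdx i) ((-1:ℤ)^i * c)) = (c * (-1)^q) • H q := by
    intro c q
    rw [hHdef, Finset.smul_sum]
    refine Finset.sum_congr rfl fun i _ => ?_
    rw [Finsupp.smul_single]
    congr 1
    have h1 : ((-1:ℤ))^q * (-1)^q = 1 := by rw [← mul_pow]; norm_num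
    rw [smul_eq_mul, pow_add]
    linear_combination (-(c * ((-1:ℤ))^i)) * h1
  have key : ∑ q ∈ Finset.range (n+1), H q = 0 := by
    have := simplicial t
    rw [htlen, Nat.add_sub_cancel] at this
    exact this
  have herase : ∑ q ∈ (Finset.range (n+1)).erase j, H q = - H j := by
    have h3 := Finset.sum_erase_add (Finset.range (n+1)) H
      (Finset.mem_range.mpr (by omega : j < n + 1))
    rw [key] at h3
    exact eq_neg_of_add_eq_zero_left h3
  have hq_lt : ∀ s, s < n → iOf j s - 1 < n + 1 := by
    intro s hs; unfold iOf; split <;> omega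
  have hterm : ∀ s ∈ Finset.range n,
      bdryMap (k * (-1) ^ (iOf j s + j)) (childTuple C (a :: l') s)
        = (-(k * (-1)^j)) • H (iOf j s - 1) := by
    intro s hs
    rw [Finset.mem_range] at hs
    have hiq : iOf j s = (iOf j s - 1) + 1 := by unfold iOf; split <;> omega
    rw [hchild s, bdryMap]
    simp only [List.tail_cons]
    rw [hlen_erase _ (hq_lt s hs), hH]
    congr 1
    have h1 : ((-1:ℤ))^(iOf j s - 1) * (-1)^(iOf j s - 1) = 1 := by rw [← mul_pow]; norm_num
    rw [hiq, pow_add, pow_add, pow_one]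
    simp only [Nat.add_sub_cancel]
    linear_combination (-(k * ((-1:ℤ))^j)) * h1
  have hLHS : bdryMap k (a :: l') = (k * (-1)^j) • H j := by
    rw [bdryMap]
    simp only [List.tail_cons]
    rw [htail_l, hlen_erase j (by omega)]
    exact hH k j
  rw [hLHS, Finset.sum_congr rfl hterm, ← Finset.smul_sum]
  have hre : ∑ s ∈ Finset.range n, H (iOf j s - 1)
      = ∑ q ∈ (Finset.range (n+1)).erase j, H q := by
    refine Finset.sum_nbij' (fun s => iOf j s - 1) (fun q => if q < j then q else q - 1)
      ?_ ?_ ?_ ?_ ?_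
    · intro s hs; rw [Finset.mem_range] at hs; rw [Finset.mem_erase, Finset.mem_range]
      unfold iOf; split <;> omega
    · intro q hq; rw [Finset.mem_erase, Finset.mem_range] at hq; rw [Finset.mem_range]
      split <;> omega
    · intro s hs; rw [Finset.mem_range] at hs
      unfold iOf; split <;> rename_i h <;> split <;> omega
    · intro q hq; rw [Finset.mem_erase, Finset.mem_range] at hq
      unfold iOf
      by_cases h : q < j
      · simp only [if_pos h]; omega
      · have h2 : ¬ (q - 1 < j) := by omega
        simp only [if_neg h]; rw [if_neg h2]; omega
    · intro s hs; rfl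
  rw [hre, herase, smul_neg, neg_smul, neg_neg]

/- ## the ordinal-valued termination measure -/

noncomputable def dval (β : Ordinal) : ℕ → List Ordinal → Ordinal
  | _, [] => 0
  | 0, _ :: _ => 0
  | (L+1), (d :: D) => β ^ L * d + dval β L D

lemma dval_lt_pow (β : Ordinal) (hβ : 0 < β) :
    ∀ (L : ℕ) (D : List Ordinal), D.length ≤ L → (∀ d ∈ D, d < β) → dval β L D < β ^ L
  | L, [], _, _ => by
      have : dval β L [] = 0 := by cases L <;> rw [dval]
      rw [this]; exact pos_iff_ne_zero.mpr (pow_ne_zero L (pos_iff_ne_zero.mp hβ))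
  | 0, (d :: D), h, _ => by simp at h
  | (L+1), (d :: D), h, hd => by
      rw [dval]
      calc β ^ L * d + dval β L D
          < β ^ L * d + β ^ L := add_lt_add_right (dval_lt_pow β hβ L D (by simpa using h)
            (fun x hx => hd x (List.mem_cons_of_mem _ hx))) _
        _ = β ^ L * (d + 1) := by rw [mul_add, mul_one]
        _ ≤ β ^ L * β := mul_le_mul_right
            (Order.add_one_le_iff.mpr (hd d (List.mem_cons_self))) _
        _ = β ^ (L+1) := (pow_succ β L).symm

lemma dval_lt_dval (β : Ordinal) (hβ : 0 < β) :
    ∀ (X : List Ordinal), (∀ d ∈ X, d < β) → ∀ (L : ℕ) (q p : Ordinal) (Q P : List Ordinal),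
      q < p → p < β → (∀ d ∈ Q, d < β) → (X ++ q :: Q).length ≤ L →
      dval β L (X ++ q :: Q) < dval β L (X ++ p :: P)
  | [], _, L, q, p, Q, P, hqp, hp, hQ, hlen => by
      match L with
      | 0 => simp at hlen
      | (K+1) =>
        simp only [List.nil_append] at *
        rw [dval, dval]
        calc β ^ K * q + dval β K Q
            < β ^ K * q + β ^ K := add_lt_add_right (dval_lt_pow β hβ K Q
              (by simp at hlen; omega) hQ) _
          _ = β ^ K * (q+1) := by rw [mul_add, mul_one]
          _ ≤ β ^ K * p := mul_le_mul_right (Order.add_one_le_iff.mpr hqp) _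
          _ ≤ β ^ K * p + dval β K P := le_self_add
  | (x :: X), hX, L, q, p, Q, P, hqp, hp, hQ, hlen => by
      match L with
      | 0 => simp at hlen
      | (K+1) =>
        rw [List.cons_append, List.cons_append, dval, dval]
        exact add_lt_add_right (dval_lt_dval β hβ X
          (fun d hd => hX d (List.mem_cons_of_mem _ hd)) K q p Q P hqp hp hQ
          (by simp at hlen ⊢; omega)) _

noncomputable def meas (n : ℕ) (δ : Ordinal) (C : List Ordinal → Set Ordinal)
    (l : List Ordinal) : Ordinal :=
  dval (δ + (n+2 : ℕ)) (n+2) ((maxIdxTail C l).reverse ++ [δ + (jIdx C l : ℕ)])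

lemma isIndex_iff_cons (C : List Ordinal → Set Ordinal) (a : Ordinal) (l : List Ordinal) :
    IsIndex C (a::l) ↔ IsIndex C l ∧ a ∈ C l := Iff.rfl

lemma isIndex_of_suffix (C : List Ordinal → Set Ordinal) :
    ∀ (t s : List Ordinal), s <:+ t → IsIndex C t → IsIndex C s
  | [], s, hs, _ => by rw [List.suffix_nil.mp hs]; trivial
  | (a :: t), s, hs, h => by
      rcases List.suffix_cons_iff.mp hs with rfl | hs'
      · exact h
      · exact isIndex_of_suffix C t s hs' ((isIndex_iff_cons C a t).mp h).1

lemma child_spec (n : ℕ) (δ : Ordinal) (C : List Ordinal → Set Ordinal)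
    (hC : IsHigherC n δ C) (l : List Ordinal) (hl : l.length = n + 1)
    (hδ : ∀ x ∈ l, x < δ) (hb : ¬ IsBoundaryAt C l) (s : ℕ) (hs : s < n) :
    (childTuple C l s).length = n + 1 ∧ (∀ x ∈ childTuple C l s, x < δ) ∧
      meas n δ C (childTuple C l s) < meas n δ C l := by
  classical
  have hn0 : 0 < n := by omega
  rcases l with _ | ⟨a, l'⟩
  · simp at hl
  have hl' : l'.length = n := by simpa using hl
  have hlne : l' ≠ [] := by intro h; rw [h] at hl'; simp at hl'; omega
  set β : Ordinal := δ + (n+2 : ℕ) with hβdef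
  have hβ : 0 < β := lt_of_lt_of_le (by exact_mod_cast Nat.succ_pos (n+1))
    le_add_self
  have hδβ : δ < β := by
    rw [hβdef]
    have h0 : (0:Ordinal) < ((n+2:ℕ):Ordinal) := by exact_mod_cast Nat.succ_pos (n+1)
    calc δ = δ + 0 := (add_zero δ).symm
    _ < δ + ((n+2:ℕ):Ordinal) := add_lt_add_right h0 δ
  set τ := maxIdxTail C (a :: l') with hτdef
  have hτ : τ <:+ l' := maxIdxTail_suffix C (a :: l')
  have hτidx : IsIndex C τ := maxIdxTail_isIndex C (a :: l')
  have hm : τ.length ≤ n := hl' ▸ hτ.length_le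
  have hτmem : ∀ x ∈ τ, x < δ := fun x hx => hδ x (List.mem_cons_of_mem _ (hτ.sublist.subset hx))
  -- τ is nonempty
  have hglast : [l'.getLast hlne] <:+ l' := by
    conv_rhs => rw [← List.dropLast_append_getLast hlne]
    exact List.suffix_append _ _
  have hgidx : IsIndex C [l'.getLast hlne] := by
    rw [isIndex_iff_cons, hC.1]
    exact ⟨trivial, hδ _ (List.mem_cons_of_mem _ (List.getLast_mem hlne))⟩
  have hτne : τ ≠ [] := by
    have h1 := maxIdxTail_maximal C (a :: l') [l'.getLast hlne] (by simpa using hglast) hgidx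
    rw [← hτdef] at h1
    intro h
    rw [h] at h1
    simpa using h1
  have hm1 : 1 ≤ τ.length := List.length_pos_iff.mpr hτne
  have hj : jIdx C (a :: l') = n - τ.length := by simp [jIdx, hl, ← hτdef]
  set j := jIdx C (a :: l') with hjdef
  have hjn : j + τ.length = n := by omega
  have hjlt : j < n := by omega
  -- the step ordinal ξ
  have hne : (C τ ∩ Set.Ici (pivot C (a :: l'))).Nonempty := by
    rw [Set.nonempty_iff_ne_empty, hτdef]
    exact hb
  set ξ := stepOut C (a :: l') with hξdef
  have hξmem : ξ ∈ C τ ∩ Set.Ici (pivot C (a :: l')) := by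
    rw [hξdef, stepOut, ← hτdef]
    exact csInf_mem hne
  have hξCτ : ξ ∈ C τ := hξmem.1
  -- head decomposition of τ
  obtain ⟨α, T0, hτeq⟩ : ∃ α T0, τ = α :: T0 := by
    rcases τ with _ | ⟨α, T0⟩
    · simp at hτne
    · exact ⟨α, T0, rfl⟩
  have hT0idx : IsIndex C T0 := ((isIndex_iff_cons C α T0).mp (hτeq ▸ hτidx)).1
  have hαT0 : α ∈ C T0 := ((isIndex_iff_cons C α T0).mp (hτeq ▸ hτidx)).2
  have hT0len : T0.length < n := by
    have : τ.length = T0.length + 1 := by rw [hτeq]; simp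
    omega
  have hsubτ : C (α :: T0) ⊆ C T0 ∩ Set.Iio α := (hC.2 T0 hT0idx hT0len α hαT0).1
  have hξα : ξ < α := (hsubτ (hτeq ▸ hξCτ)).2
  have hαδ : α < δ := hδ α (List.mem_cons_of_mem _ (hτ.sublist.subset (hτeq ▸ List.mem_cons_self)))
  have hξδ : ξ < δ := hξα.trans hαδ
  -- the expanded tuple
  have hdrop' : l'.drop j = τ := by
    have h2 := suffix_drop_eq hτ
    rw [hl'] at h2
    rw [hj]
    exact h2
  have hjtk : (l'.take j).length = j := by rw [List.length_take, hl']; omega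
  have he : expTuple C (a :: l') = (a :: l'.take j) ++ ξ :: τ := by
    rw [expTuple, ← hjdef, ← hξdef, ← hτdef, List.take_succ_cons, List.cons_append]
  have helen : (expTuple C (a :: l')).length = n + 2 := by
    rw [he]
    simp [hjtk]
    omega
  have hiOflt : iOf j s < n + 2 := by unfold iOf; split <;> omega
  set c := childTuple C (a :: l') s with hcdef
  have hclen : c.length = n + 1 := by
    rw [hcdef, childTuple, List.length_eraseIdx, ← hjdef]
    rw [helen, if_pos hiOflt]
    omega
  have hcmem : ∀ x ∈ c, x < δ := by
    intro x hx
    have hx' : x ∈ expTuple C (a :: l') := by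
      rw [hcdef, childTuple, ← hjdef] at hx
      exact (List.eraseIdx_sublist _ _).subset hx
    rw [he] at hx'
    simp only [List.cons_append, List.mem_cons, List.mem_append] at hx'
    rcases hx' with rfl | h | rfl | h
    · exact hδ x (List.mem_cons_self)
    · exact hδ x (List.mem_cons_of_mem _ (List.take_subset _ _ h))
    · exact hξδ
    · exact hτmem x h
  refine ⟨hclen, hcmem, ?_⟩
  -- now the measure decrease
  set τ' := maxIdxTail C c with hτ'def
  have hτ'suf : τ' <:+ c.tail := maxIdxTail_suffix C c
  have hτ'len : τ'.length ≤ n := by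
    have h4 := hτ'suf.length_le
    rw [List.length_tail, hclen] at h4
    omega
  have hτ'mem : ∀ x ∈ τ', x < δ := fun x hx =>
    hcmem x ((List.tail_sublist c).subset (hτ'suf.sublist.subset hx))
  have hj'δ : δ + ((jIdx C c : ℕ) : Ordinal) < β := by
    have h6 : jIdx C c ≤ n := by rw [jIdx, hclen]; omega
    rw [hβdef]
    exact add_lt_add_right (by exact_mod_cast (show jIdx C c < n + 2 by omega)) δ
  have hδj : δ ≤ δ + ((j:ℕ) : Ordinal) := le_self_add
  have hjβ : δ + ((j:ℕ) : Ordinal) < β := by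
    rw [hβdef]
    exact add_lt_add_right (by exact_mod_cast (by omega : j < n + 2)) δ
  obtain ⟨T, p, y, Z, P, hτW, hcZ, hZne, hyidx, hyp, hpβ⟩ :
      ∃ (T : List Ordinal) (p y : Ordinal) (Z P : List Ordinal),
        (τ.reverse ++ [δ + ((j:ℕ):Ordinal)] = T.reverse ++ p :: P) ∧
        c = Z ++ y :: T ∧ Z ≠ [] ∧ IsIndex C (y :: T) ∧ y < p ∧ p < β := by
    by_cases hcase : s < j
    -- case A : a coordinate strictly below the pivot is deleted
    · refine ⟨τ, δ + ((j:ℕ):Ordinal), ξ,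
        (a :: l'.take j).eraseIdx (iOf j s), [], rfl, ?_, ?_, ?_, ?_, ?_⟩
      · rw [hcdef, childTuple, ← hjdef, he, eraseIdx_append_left _ _ _
          (by simp [hjtk]; unfold iOf; rw [if_pos hcase]; omega)]
      · have hZl : ((a :: l'.take j).eraseIdx (iOf j s)).length = j := by
          rw [List.length_eraseIdx, if_pos]
          · simp [hjtk]
          · simp [hjtk]; unfold iOf; rw [if_pos hcase]; omega
        intro h
        rw [h] at hZl
        simp at hZl
        omega
      · exact (isIndex_iff_cons C ξ τ).mpr ⟨hτidx, hξCτ⟩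
      · exact lt_of_lt_of_le hξδ hδj
      · exact hjβ
    -- case B : a coordinate of τ is deleted
    · set r := s - j with hrdef
      have hr : r < τ.length := by omega
      have hταT : τ.drop r = τ.get ⟨r, hr⟩ :: τ.drop (r+1) := (List.getElem_cons_drop hr).symm
      set T := τ.drop (r+1) with hTdef
      set p := τ.get ⟨r, hr⟩ with hpdef
      have hTidx' : IsIndex C (p :: T) := by
        rw [← hταT]
        exact isIndex_of_suffix C τ _ (List.drop_suffix _ _) hτidx
      have hTidx : IsIndex C T := ((isIndex_iff_cons C p T).mp hTidx').1
      have hpT : p ∈ C T := ((isIndex_iff_cons C p T).mp hTidx').2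
      have hTlen : T.length < n := by
        have h5 : T.length = τ.length - (r+1) := by rw [hTdef, List.length_drop]
        omega
      have hsubT : C (p :: T) ⊆ C T ∩ Set.Iio p := (hC.2 T hTidx hTlen p hpT).1
      have hpδ : p < δ := hτmem p (List.get_mem τ ⟨r, hr⟩)
      have hτsplit : τ = τ.take r ++ p :: T := by
        conv_lhs => rw [← List.take_append_drop r τ, hταT]
      have hτrev : τ.reverse ++ [δ + ((j:ℕ):Ordinal)]
          = T.reverse ++ p :: ((τ.take r).reverse ++ [δ + ((j:ℕ):Ordinal)]) := by
        conv_lhs => rw [hτsplit]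
        simp
      have hcB : c = (a :: l'.take j) ++ ξ :: τ.eraseIdx r := by
        rw [hcdef, childTuple, ← hjdef, he,
          show iOf j s = (a :: l'.take j).length + (r + 1) by
            simp [hjtk]; unfold iOf; rw [if_neg hcase]; omega,
          eraseIdx_append_right]
        rfl
      rcases Nat.eq_zero_or_pos r with hr0 | hr1
      -- subcase : the bottom element of τ is deleted
      · have hτeq' : τ = p :: T := by
          conv_lhs => rw [← List.drop_zero (l := τ), ← hr0, hταT]
        have hξpT := hsubT (hτeq' ▸ hξCτ)
        refine ⟨T, p, ξ, a :: l'.take j, (τ.take r).reverse ++ [δ + ((j:ℕ):Ordinal)],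
          hτrev, ?_, by simp, ?_, hξpT.2, hpδ.trans hδβ⟩
        · rw [hcB, hr0, hτeq', List.eraseIdx_cons_zero]
        · exact (isIndex_iff_cons C ξ T).mpr ⟨hTidx, hξpT.1⟩
      -- subcase : a higher element of τ is deleted
      · have hr' : r - 1 < τ.length := by omega
        set y := τ.get ⟨r-1, hr'⟩ with hydef
        have hdrop1 : τ.drop (r-1) = y :: τ.drop r := by
          rw [show τ.drop (r-1) = τ.get ⟨r-1,hr'⟩ :: τ.drop (r-1+1) from
            (List.getElem_cons_drop hr').symm, show r - 1 + 1 = r by omega]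
        have hyidx' : IsIndex C (y :: p :: T) := by
          rw [← hταT, ← hdrop1]
          exact isIndex_of_suffix C τ _ (List.drop_suffix _ _) hτidx
        have hypT := hsubT ((isIndex_iff_cons C y (p::T)).mp hyidx').2
        have htk : τ.take (r-1) ++ [y] = τ.take r := by
          rw [hydef, show (τ.get ⟨r-1,hr'⟩ : Ordinal) = τ[r-1]'hr' from rfl,
            List.take_concat_get' τ (r-1) hr', show r - 1 + 1 = r by omega]
        refine ⟨T, p, y, (a :: l'.take j) ++ ξ :: τ.take (r-1),
          (τ.take r).reverse ++ [δ + ((j:ℕ):Ordinal)], hτrev, ?_, by simp, ?_, hypT.2,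
          hpδ.trans hδβ⟩
        · rw [hcB, List.eraseIdx_eq_take_drop_succ, ← hTdef, ← htk]
          simp
        · exact (isIndex_iff_cons C y T).mpr ⟨hTidx, hypT.1⟩
  -- assemble the strict inequality of measures
  have hsuffix : y :: T <:+ c.tail := by
    rw [hcZ, List.tail_append_of_ne_nil hZne]
    exact List.suffix_append _ _
  have hsub' : y :: T <:+ τ' := maxIdxTail_maximal C c _ hsuffix hyidx
  obtain ⟨u, hu⟩ := hsub'
  have hulen : τ'.length = u.length + 1 + T.length := by rw [← hu]; simp; omega
  have hchildd : τ'.reverse ++ [δ + ((jIdx C c : ℕ):Ordinal)]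
      = T.reverse ++ y :: (u.reverse ++ [δ + ((jIdx C c : ℕ):Ordinal)]) := by
    rw [← hu]
    simp
  rw [meas, meas, ← hτdef, ← hjdef, ← hτ'def, ← hβdef, hτW, hchildd]
  refine dval_lt_dval β hβ T.reverse ?_ (n+2) y p _ P hyp hpβ ?_ ?_
  · intro d hd
    exact lt_trans (hτ'mem d (hu ▸ (List.mem_append_right u (List.mem_cons_of_mem _
      (List.mem_reverse.mp hd))))) hδβ
  · intro d hd
    rcases List.mem_append.mp hd with h | h
    · exact lt_trans (hτ'mem d (hu ▸ (List.mem_append_left _ (List.mem_reverse.mp h)))) hδβ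
    · rw [List.mem_singleton.mp h]
      exact hj'δ
  · have h9 := hτ'len
    rw [hulen] at h9
    simp only [List.length_append, List.length_reverse, List.length_cons, List.length_nil]
    omega

lemma validIdx_cons (C : List Ordinal → Set Ordinal) (l : List Ordinal) (s : ℕ) (σ : List ℕ) :
    ValidIdx C l (s::σ) ↔
      (¬ IsBoundaryAt C l ∧ s < l.length - 1 ∧ ValidIdx C (childTuple C l s) σ) := Iff.rfl

lemma walkNode_nil (C : List Ordinal → Set Ordinal) (l : List Ordinal) :
    walkNode C l [] = l := rfl

lemma walkNode_cons (C : List Ordinal → Set Ordinal) (l : List Ordinal) (s : ℕ) (σ : List ℕ) :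
    walkNode C l (s::σ) = walkNode C (childTuple C l s) σ := rfl

lemma nodeSign_nil (C : List Ordinal → Set Ordinal) (k : ℤ) (l : List Ordinal) :
    nodeSign C k l [] = k := rfl

lemma nodeSign_cons (C : List Ordinal → Set Ordinal) (k : ℤ) (l : List Ordinal) (s : ℕ)
    (σ : List ℕ) : nodeSign C k l (s::σ) =
      nodeSign C (k * (-1) ^ (iOf (jIdx C l) s + jIdx C l)) (childTuple C l s) σ := rfl

set_option maxHeartbeats 1000000 in
lemma main_walk (n : ℕ) (δ : Ordinal) (C : List Ordinal → Set Ordinal)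
    (hC : IsHigherC n δ C) (hn : 1 < n) :
    ∀ (o : Ordinal) (l : List Ordinal), meas n δ C l = o → l.length = n + 1 →
      (∀ x ∈ l, x < δ) →
      (BdryNodes C l).Finite ∧ ∀ k : ℤ,
        (∑ᶠ σ ∈ BdryNodes C l, bdryMap (nodeSign C k l σ) (walkNode C l σ)) = bdryMap k l := by
  intro o
  induction o using Ordinal.induction with
  | _ o IH =>
  intro l ho hl hδ
  by_cases hb : IsBoundaryAt C l
  · have hset : BdryNodes C l = {[]} := by
      ext σ
      simp only [BdryNodes, Set.mem_setOf_eq, Set.mem_singleton_iff]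
      constructor
      · rintro ⟨hv, _⟩
        cases σ with
        | nil => rfl
        | cons s σ' => exact absurd hb ((validIdx_cons C l s σ').mp hv).1
      · rintro rfl
        exact ⟨trivial, hb⟩
    refine ⟨by rw [hset]; exact Set.finite_singleton _, fun k => ?_⟩
    rw [hset, finsum_mem_singleton, nodeSign_nil, walkNode_nil]
  · have hchild := fun (s : Fin n) => child_spec n δ C hC l hl hδ hb s.val s.isLt
    have hkid := fun (s : Fin n) => IH (meas n δ C (childTuple C l s.val))
      (by rw [← ho]; exact (hchild s).2.2) _ rfl (hchild s).1 (hchild s).2.1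
    have hdecomp : BdryNodes C l
        = ⋃ s : Fin n, (fun σ => (s.val :: σ)) '' BdryNodes C (childTuple C l s.val) := by
      ext σ
      simp only [Set.mem_iUnion, Set.mem_image, BdryNodes, Set.mem_setOf_eq]
      constructor
      · rintro ⟨hv, hbd⟩
        cases σ with
        | nil => rw [walkNode_nil] at hbd; exact absurd hbd hb
        | cons s σ' =>
          obtain ⟨h1, h2, h3⟩ := (validIdx_cons C l s σ').mp hv
          rw [hl] at h2
          exact ⟨⟨s, by omega⟩, σ', ⟨h3, hbd⟩, rfl⟩
      · rintro ⟨⟨s, hslt⟩, σ', ⟨hv, hbd⟩, rfl⟩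
        exact ⟨(validIdx_cons C l s σ').mpr ⟨hb, by rw [hl]; simpa using hslt, hv⟩, hbd⟩
    have hdisj : Pairwise (Function.onFun Disjoint
        fun s : Fin n => (fun σ => (s.val :: σ)) '' BdryNodes C (childTuple C l s.val)) := by
      intro s₁ s₂ hne
      rw [Function.onFun, Set.disjoint_left]
      rintro σ ⟨σ₁, _, rfl⟩ ⟨σ₂, _, h⟩
      apply hne
      ext
      exact (List.cons.injEq _ _ _ _ ▸ h).1.symm ▸ rfl
    refine ⟨by rw [hdecomp]; exact Set.finite_iUnion fun s => ((hkid s).1).image _, fun k => ?_⟩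
    rw [hdecomp, finsum_mem_iUnion hdisj (fun s => ((hkid s).1).image _)]
    have hterm : ∀ s : Fin n,
        (∑ᶠ σ ∈ (fun σ => (s.val :: σ)) '' BdryNodes C (childTuple C l s.val),
          bdryMap (nodeSign C k l σ) (walkNode C l σ))
        = bdryMap (k * (-1) ^ (iOf (jIdx C l) s.val + jIdx C l)) (childTuple C l s.val) := by
      intro s
      rw [finsum_mem_image (by intro x _ y _ h; simpa using h)]
      exact (hkid s).2 _
    rw [finsum_eq_sum_of_fintype, Finset.sum_congr rfl (fun s _ => hterm s)]
    calc ∑ s : Fin n, (fun m => bdryMap (k * (-1) ^ (iOf (jIdx C l) m + jIdx C l))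
            (childTuple C l m)) s.val
        = ∑ m ∈ Finset.range n, bdryMap (k * (-1) ^ (iOf (jIdx C l) m + jIdx C l))
            (childTuple C l m) := Fin.sum_univ_eq_sum_range
              (fun m => bdryMap (k * (-1) ^ (iOf (jIdx C l) m + jIdx C l)) (childTuple C l m)) n
      _ = bdryMap k l := (conserved n C k l hl).symm


/-- For `n > 1` and an order-`n` C-sequence on `δ`: (1) the boundary map `∂_n` is conserved
under any nondegenerate expansion step of a `Tr_n`-term, i.e. `∂_n Tr_n(k, ι(γ⃗), τ(γ⃗))`
equals `∂_n` of the disjoint union of its `n` successor terms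
`Tr_n(k·(−1)^{i+j}, (ι(γ⃗), min(C_{τ(γ⃗)} \ γ_j), τ(γ⃗))^i)`, `i ∈ {1,…,n+1} \ {j+1}`;
and (2) consequently, any finite collection of `Tr_n`-terms which is cyclic (total `∂_n`
equal to `0`) has cyclic collection of boundary terms. -/
theorem bdry_conserved_and_cyclic (n : ℕ) (hn : 1 < n) (δ : Ordinal)
    (C : List Ordinal → Set Ordinal) (hC : IsHigherC n δ C) :
    (∀ (k : ℤ), (k = 1 ∨ k = -1) → ∀ l : List Ordinal, l.length = n + 1 →
      l.Pairwise (· ≤ ·) → (∀ x ∈ l, x < δ) → ¬ IsBoundaryAt C l →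
        bdryMap k l =
          ∑ s ∈ Finset.range n,
            bdryMap (k * (-1) ^ (iOf (jIdx C l) s + jIdx C l)) (childTuple C l s)) ∧
    (∀ L : List (ℤ × List Ordinal),
      (∀ p ∈ L, (p.1 = 1 ∨ p.1 = -1) ∧ p.2.length = n + 1 ∧ p.2.Pairwise (· ≤ ·) ∧
        ∀ x ∈ p.2, x < δ) →
      (L.map fun p => bdryMap p.1 p.2).sum = 0 →
      (L.map fun p =>
        ∑ᶠ σ ∈ BdryNodes C p.2,
          bdryMap (nodeSign C p.1 p.2 σ) (walkNode C p.2 σ)).sum = 0) := by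
  constructor
  · intro k _ l hl _ _ _
    exact conserved n C k l hl
  · intro L hL hsum
    have h : ∀ p ∈ L,
        (∑ᶠ σ ∈ BdryNodes C p.2, bdryMap (nodeSign C p.1 p.2 σ) (walkNode C p.2 σ))
          = bdryMap p.1 p.2 := by
      intro p hp
      obtain ⟨_, hlen, _, hbound⟩ := hL p hp
      exact (main_walk n δ C hC hn _ p.2 rfl hlen hbound).2 p.1
    rw [List.map_congr_left (fun p hp => h p hp)]
    exact hsum
end
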